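/- arXiv:2403.05439 — 10 statements merged into one kernel-verified Lean document; each statement's English description precedes it below -/
import Mathlib

section
/- Let V be a finite variable set and let I and J be monomial ideals with finite minimal generating sets Gens(I) and Gens(J) whose elements are supported on two disjoint subsets of V. Then the minimal generating set of I + J is the disjoint union Gens(I) ∪ Gens(J), and a subset γ ⊆ Gens(I) ∪ Gens(J) is a Scarf face of I + J if and only if γ ∩ Gens(I) is a Scarf face of I and γ ∩ Gens(J) is a Scarf face of J (that is, Scarf(I+J) = Scarf(I) * Scarf(J), the join of the two Scarf complexes). -/
/-- Componentwise lcm (sup) of a finite set of exponent vectors. -/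
def mLcm {V : Type*} (σ : Finset (V → ℕ)) : V → ℕ := σ.sup id

/-- `σ` is a Scarf face of the monomial ideal with minimal generating set `M`. -/
def IsScarfFace {V : Type*} (M σ : Finset (V → ℕ)) : Prop :=
  σ ⊆ M ∧ ∀ τ ⊆ M, mLcm τ = mLcm σ → τ = σ

lemma mLcm_apply {V : Type*} (σ : Finset (V → ℕ)) (x : V) :
    mLcm σ x = σ.sup (fun m => m x) := by
  simp [mLcm, Finset.sup_apply]

lemma mLcm_union {V : Type*} [DecidableEq (V → ℕ)] (s t : Finset (V → ℕ)) :
    mLcm (s ∪ t) = mLcm s ⊔ mLcm t :=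
  Finset.sup_union

lemma sup_disj {V : Type*} {A B s t : Finset (V → ℕ)}
    (hdisj : ∀ m ∈ A, ∀ n ∈ B, ∀ x : V, m x = 0 ∨ n x = 0)
    (hs : s ⊆ A) (ht : t ⊆ B) (x : V) :
    s.sup (fun m => m x) = 0 ∨ t.sup (fun m => m x) = 0 := by
  by_contra h
  push_neg at h
  obtain ⟨h1, h2⟩ := h
  have e1 : ∃ m ∈ s, m x ≠ 0 := by
    by_contra hc; push_neg at hc
    exact h1 ((Finset.sup_eq_bot_iff _ _).mpr hc)
  have e2 : ∃ n ∈ t, n x ≠ 0 := by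
    by_contra hc; push_neg at hc
    exact h2 ((Finset.sup_eq_bot_iff _ _).mpr hc)
  obtain ⟨m, hm, hm0⟩ := e1
  obtain ⟨n, hn, hn0⟩ := e2
  rcases hdisj m (hs hm) n (ht hn) x with h | h
  · exact hm0 h
  · exact hn0 h

lemma decomp {V : Type*} [DecidableEq (V → ℕ)] {A B σ : Finset (V → ℕ)}
    (hσ : σ ⊆ A ∪ B) : σ = (σ ∩ A) ∪ (σ ∩ B) := by
  rw [← Finset.inter_union_distrib_left, Finset.inter_eq_left.mpr hσ]

lemma nat_aux {a1 b1 a2 b2 : ℕ} (hx : max a1 b1 = max a2 b2)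
    (d1 : a1 = 0 ∨ b1 = 0) (d2 : a2 = 0 ∨ b2 = 0)
    (d3 : a1 = 0 ∨ b2 = 0) (d4 : a2 = 0 ∨ b1 = 0) : a1 = a2 := by
  omega

lemma mLcm_inter_eq {V : Type*} [DecidableEq (V → ℕ)] {A B τ σ : Finset (V → ℕ)}
    (hdisj : ∀ m ∈ A, ∀ n ∈ B, ∀ x : V, m x = 0 ∨ n x = 0)
    (hτ : τ ⊆ A ∪ B) (hσ : σ ⊆ A ∪ B) (h : mLcm τ = mLcm σ) :
    mLcm (τ ∩ A) = mLcm (σ ∩ A) := by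
  funext x
  have hτd := decomp (A := A) (B := B) hτ
  have hσd := decomp (A := A) (B := B) hσ
  rw [hτd, hσd] at h
  have hx := congrFun h x
  rw [mLcm_apply, mLcm_apply, Finset.sup_union, Finset.sup_union] at hx
  have d1 := sup_disj hdisj (Finset.inter_subset_right : τ ∩ A ⊆ A)
    (Finset.inter_subset_right : τ ∩ B ⊆ B) x
  have d2 := sup_disj hdisj (Finset.inter_subset_right : σ ∩ A ⊆ A)
    (Finset.inter_subset_right : σ ∩ B ⊆ B) x
  have d3 := sup_disj hdisj (Finset.inter_subset_right : τ ∩ A ⊆ A)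
    (Finset.inter_subset_right : σ ∩ B ⊆ B) x
  have d4 := sup_disj hdisj (Finset.inter_subset_right : σ ∩ A ⊆ A)
    (Finset.inter_subset_right : τ ∩ B ⊆ B) x
  rw [mLcm_apply, mLcm_apply]
  exact nat_aux hx d1 d2 d3 d4

theorem stmt0 {V : Type*} [Fintype V] [DecidableEq V]
    (A B : Finset (V → ℕ))
    (hA0 : ∀ m ∈ A, m ≠ 0) (hB0 : ∀ m ∈ B, m ≠ 0)
    (hAmin : ∀ m ∈ A, ∀ n ∈ A, m ≤ n → m = n)
    (hBmin : ∀ m ∈ B, ∀ n ∈ B, m ≤ n → m = n)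
    (hdisj : ∀ m ∈ A, ∀ n ∈ B, ∀ x : V, m x = 0 ∨ n x = 0) :
    Disjoint A B ∧
      (∀ m ∈ A ∪ B, ∀ n ∈ A ∪ B, m ≤ n → m = n) ∧
      ∀ γ ⊆ A ∪ B,
        (IsScarfFace (A ∪ B) γ ↔ IsScarfFace A (γ ∩ A) ∧ IsScarfFace B (γ ∩ B)) := by
  have hdisj' : ∀ m ∈ B, ∀ n ∈ A, ∀ x : V, m x = 0 ∨ n x = 0 := by
    intro m hm n hn x
    exact (hdisj n hn m hm x).symm
  -- cross comparison impossible
  have hcrossAB : ∀ m ∈ A, ∀ n ∈ B, ¬ m ≤ n := by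
    intro m hm n hn hle
    apply hA0 m hm
    funext x
    have hmn : m x ≤ n x := hle x
    simp only [Pi.zero_apply]
    rcases hdisj m hm n hn x with h | h
    · exact h
    · omega
  have hcrossBA : ∀ m ∈ B, ∀ n ∈ A, ¬ m ≤ n := by
    intro m hm n hn hle
    apply hB0 m hm
    funext x
    have hmn : m x ≤ n x := hle x
    simp only [Pi.zero_apply]
    rcases hdisj n hn m hm x with h | h
    · omega
    · exact h
  have hDisj : Disjoint A B := by
    rw [Finset.disjoint_left]
    intro m hmA hmB
    exact hcrossAB m hmA m hmB le_rfl
  refine ⟨hDisj, ?_, ?_⟩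
  · intro m hm n hn hle
    rcases Finset.mem_union.mp hm with hmA | hmB <;>
      rcases Finset.mem_union.mp hn with hnA | hnB
    · exact hAmin m hmA n hnA hle
    · exact absurd hle (hcrossAB m hmA n hnB)
    · exact absurd hle (hcrossBA m hmB n hnA)
    · exact hBmin m hmB n hnB hle
  · intro γ hγ
    constructor
    · rintro ⟨hsub, hScarf⟩
      constructor
      · refine ⟨Finset.inter_subset_right, ?_⟩
        intro τ hτA hτlcm
        have hτ' : τ ∪ (γ ∩ B) ⊆ A ∪ B :=
          Finset.union_subset (hτA.trans Finset.subset_union_left)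
            ((Finset.inter_subset_right).trans Finset.subset_union_right)
        have hl : mLcm (τ ∪ (γ ∩ B)) = mLcm γ := by
          rw [mLcm_union, hτlcm, ← mLcm_union, ← decomp hγ]
        have heq := hScarf _ hτ' hl
        have : (τ ∪ (γ ∩ B)) ∩ A = γ ∩ A := by rw [heq]
        rw [Finset.union_inter_distrib_right, Finset.inter_eq_left.mpr hτA,
          Finset.inter_assoc] at this
        rw [← this]
        have hBA : B ∩ A = ∅ := by
          rw [← Finset.disjoint_iff_inter_eq_empty]
          exact hDisj.symm
        rw [hBA, Finset.inter_empty, Finset.union_empty]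
      · refine ⟨Finset.inter_subset_right, ?_⟩
        intro τ hτB hτlcm
        have hτ' : (γ ∩ A) ∪ τ ⊆ A ∪ B :=
          Finset.union_subset ((Finset.inter_subset_right).trans Finset.subset_union_left)
            (hτB.trans Finset.subset_union_right)
        have hl : mLcm ((γ ∩ A) ∪ τ) = mLcm γ := by
          rw [mLcm_union, hτlcm, ← mLcm_union, ← decomp hγ]
        have heq := hScarf _ hτ' hl
        have : ((γ ∩ A) ∪ τ) ∩ B = γ ∩ B := by rw [heq]
        rw [Finset.union_inter_distrib_right, Finset.inter_eq_left.mpr hτB,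
          Finset.inter_assoc] at this
        rw [← this]
        have hAB : A ∩ B = ∅ := by
          rw [← Finset.disjoint_iff_inter_eq_empty]
          exact hDisj
        rw [hAB, Finset.inter_empty, Finset.empty_union]
    · rintro ⟨⟨_, hSA⟩, ⟨_, hSB⟩⟩
      refine ⟨hγ, ?_⟩
      intro τ hτ hτlcm
      have hA' : mLcm (τ ∩ A) = mLcm (γ ∩ A) := mLcm_inter_eq hdisj hτ hγ hτlcm
      have hB' : mLcm (τ ∩ B) = mLcm (γ ∩ B) := by
        have := mLcm_inter_eq (A := B) (B := A) hdisj'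
          (by rwa [Finset.union_comm]) (by rwa [Finset.union_comm]) hτlcm
        exact this
      have e1 : τ ∩ A = γ ∩ A := hSA _ Finset.inter_subset_right hA'
      have e2 : τ ∩ B = γ ∩ B := hSB _ Finset.inter_subset_right hB'
      rw [decomp hτ, e1, e2, ← decomp hγ]
end

section
/- Let G be a finite simple graph, let H be an induced subgraph of G, and let t ≥ 1. Then every minimal generator of I(H)^t is a minimal generator of I(G)^t; explicitly, if a monomial m is a sum of t edge monomials of H and is minimal with respect to componentwise ≤ among all sums of t edge monomials of H, then m is also minimal with respect to componentwise ≤ among all sums of t edge monomials of G. -/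
/-- The monomial (exponent vector) of an edge: `1` on its endpoints, `0` elsewhere. -/
def edgeMon {V : Type*} [DecidableEq V] (e : Sym2 V) : V → ℕ :=
  fun x => if x ∈ e then 1 else 0

/-- The lcm (componentwise max) of the monomials of a finite set of edges. -/
def eLcm {V : Type*} [DecidableEq V] (σ : Finset (Sym2 V)) : V → ℕ :=
  σ.sup edgeMon

/-- `σ` is a Scarf face of the edge ideal `I(G)`, identified with a set of edges of `G`:
its lcm is distinct from the lcm of any other set of edges of `G`. -/
def IsScarf {V : Type*} [DecidableEq V] (G : SimpleGraph V) (σ : Finset (Sym2 V)) : Prop :=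
  (∀ e ∈ σ, e ∈ G.edgeSet) ∧
    ∀ τ : Finset (Sym2 V), (∀ e ∈ τ, e ∈ G.edgeSet) → eLcm τ = eLcm σ → τ = σ

/-- `dist_G(e, f) = 0`: the two edges share a vertex. -/
def Dist0 {V : Type*} (e f : Sym2 V) : Prop := ∃ x, x ∈ e ∧ x ∈ f

/-- `dist_G(e, f) = 1`: the edges are vertex-disjoint, but some endpoint of `e` is
adjacent in `G` to some endpoint of `f`. -/
def Dist1 {V : Type*} (G : SimpleGraph V) (e f : Sym2 V) : Prop :=
  ¬ Dist0 e f ∧ ∃ x ∈ e, ∃ y ∈ f, G.Adj x y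

/-- `m` is a sum of `t` edge monomials of `G`, i.e. a generator of `I(G)^t`. -/
def IsEdgeSum {V : Type*} [DecidableEq V] (G : SimpleGraph V) (t : ℕ) (m : V → ℕ) : Prop :=
  ∃ s : Multiset (Sym2 V), (∀ e ∈ s, e ∈ G.edgeSet) ∧ Multiset.card s = t ∧
    (s.map edgeMon).sum = m

/-- `m` is a minimal generator of `I(G)^t`: it is a sum of `t` edge monomials of `G`,
minimal with respect to componentwise `≤` among all such sums. -/
def IsMinGen {V : Type*} [DecidableEq V] (G : SimpleGraph V) (t : ℕ) (m : V → ℕ) : Prop :=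
  IsEdgeSum G t m ∧ ∀ m', IsEdgeSum G t m' → m' ≤ m → m' = m

/-- `σ` is a Scarf face of `I(G)^t`: a set of minimal generators of `I(G)^t` whose lcm
is distinct from the lcm of any other set of minimal generators of `I(G)^t`. -/
def IsScarfPow {V : Type*} [DecidableEq V] (G : SimpleGraph V) (t : ℕ)
    (σ : Finset (V → ℕ)) : Prop :=
  (∀ m ∈ σ, IsMinGen G t m) ∧
    ∀ τ : Finset (V → ℕ), (∀ m ∈ τ, IsMinGen G t m) → mLcm τ = mLcm σ → τ = σ


lemma sum_map_apply {V : Type*} (s : Multiset (Sym2 V)) [DecidableEq V] (x : V) :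
    (s.map edgeMon).sum x = (s.map (fun e => edgeMon e x)).sum := by
  induction s using Multiset.induction with
  | empty => simp
  | cons a s ih => simp [ih]

lemma mem_W_of_edge {V : Type*} (H : SimpleGraph V) {G : SimpleGraph V} {W : Set V}
    (hH : ∀ x y, H.Adj x y ↔ G.Adj x y ∧ x ∈ W ∧ y ∈ W)
    {e : Sym2 V} (he : e ∈ H.edgeSet) {x : V} (hx : x ∈ e) : x ∈ W := by
  induction e using Sym2.ind with
  | _ a b =>
    rw [SimpleGraph.mem_edgeSet, hH] at he
    rcases Sym2.mem_iff.mp hx with rfl | rfl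
    · exact he.2.1
    · exact he.2.2

theorem stmt1 {V : Type*} [Fintype V] [DecidableEq V] (G H : SimpleGraph V) (W : Set V)
    (hH : ∀ x y, H.Adj x y ↔ G.Adj x y ∧ x ∈ W ∧ y ∈ W)
    (t : ℕ) (ht : 1 ≤ t) (m : V → ℕ) (hm : IsMinGen H t m) :
    IsMinGen G t m := by
  obtain ⟨⟨s, hs, hcard, hsum⟩, hmin⟩ := hm
  have hWm : ∀ x, 0 < m x → x ∈ W := by
    intro x hx
    rw [← hsum, sum_map_apply] at hx
    obtain ⟨y, hy, hpos⟩ : ∃ e ∈ s, 0 < edgeMon e x := by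
      by_contra h
      push_neg at h
      simp only [Nat.le_zero] at h
      have : (s.map (fun e => edgeMon e x)).sum = 0 := by
        apply Multiset.sum_eq_zero
        intro n hn
        obtain ⟨e, he, rfl⟩ := Multiset.mem_map.mp hn
        exact h e he
      omega
    have : x ∈ y := by
      unfold edgeMon at hpos
      by_contra hxy
      simp [hxy] at hpos
    exact mem_W_of_edge H hH (hs y hy) this
  constructor
  · refine ⟨s, fun e he => ?_, hcard, hsum⟩
    have h1 := hs e he
    revert h1
    induction e using Sym2.ind with
    | _ a b =>
      intro h1
      rw [SimpleGraph.mem_edgeSet] at h1 ⊢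
      exact ((hH a b).mp h1).1
  · rintro m' ⟨s', hs', hcard', hsum'⟩ hle
    have hedge : ∀ e ∈ s', e ∈ H.edgeSet := by
      intro e he
      have hle2 : ∀ x ∈ e, 0 < m x := by
        intro x hx
        have h1 : 0 < m' x := by
          have heq := sum_map_apply s' x
          rw [hsum'] at heq
          have hmem : edgeMon e x ∈ s'.map (fun e => edgeMon e x) :=
            Multiset.mem_map.mpr ⟨e, he, rfl⟩
          have hle3 := Multiset.single_le_sum (fun n _ => Nat.zero_le n) _ hmem
          have hone : edgeMon e x = 1 := by simp [edgeMon, hx]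
          omega
        exact lt_of_lt_of_le h1 (hle x)
      have hG := hs' e he
      revert hG hle2
      induction e using Sym2.ind with
      | _ a b =>
        intro hle2 hG
        rw [SimpleGraph.mem_edgeSet] at hG ⊢
        refine (hH a b).mpr ⟨hG, hWm a (hle2 a ?_), hWm b (hle2 b ?_)⟩
        · simp
        · simp
    exact hmin m' ⟨s', hedge, hcard', hsum'⟩ hle
end

section
/- Let G be a finite simple graph, let H be an induced subgraph of G with no isolated vertices, let m_H be the 0/1 exponent vector supported on the vertex set of H, and let t ≥ 1. Then: (1) every lcm of a set of minimal generators of I(H)^t is also an lcm of a set of minimal generators of I(G)^t; and (2) a set σ of minimal generators of I(H)^t is a Scarf face of I(H)^t if and only if it is a Scarf face of I(G)^t, and moreover every Scarf face of I(G)^t all of whose elements divide t·m_H consists of minimal generators of I(H)^t and is a Scarf face of I(H)^t (so Scarf(I(H)^t) is the induced subcomplex of Scarf(I(G)^t) on the generators dividing t·m_H). -/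
section Aux
variable {V : Type*} [DecidableEq V] {G H : SimpleGraph V} {W : Set V}
  [DecidablePred (· ∈ W)]

lemma msum_apply (s : Multiset (Sym2 V)) (x : V) :
    (s.map edgeMon).sum x = (s.map (fun e => edgeMon e x)).sum := by
  induction s using Multiset.induction with
  | empty => simp
  | cons a s ih => simp [ih]

lemma edgeSum_bound (hH : ∀ x y, H.Adj x y ↔ G.Adj x y ∧ x ∈ W ∧ y ∈ W)
    {t : ℕ} {m : V → ℕ} (hm : IsEdgeSum H t m) (x : V) :
    m x ≤ if x ∈ W then t else 0 := by
  obtain ⟨s, hs, hcard, rfl⟩ := hm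
  rw [msum_apply]
  by_cases hx : x ∈ W
  · simp only [hx, if_true]
    calc (s.map fun e => edgeMon e x).sum
        ≤ Multiset.card (s.map fun e => edgeMon e x) • 1 := by
          apply Multiset.sum_le_card_nsmul
          intro a ha
          obtain ⟨e, he, rfl⟩ := Multiset.mem_map.mp ha
          unfold edgeMon; split <;> simp
      _ = t := by simp [hcard]
  · simp only [hx, if_false]
    have : (s.map fun e => edgeMon e x).sum = 0 := by
      apply Multiset.sum_eq_zero
      intro a ha
      obtain ⟨e, he, rfl⟩ := Multiset.mem_map.mp ha
      unfold edgeMon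
      rw [if_neg]
      intro hxe
      have := hs e he
      revert this
      induction e using Sym2.ind with
      | _ a b =>
        intro hab
        rw [SimpleGraph.mem_edgeSet, hH] at hab
        rcases Sym2.mem_iff.mp hxe with rfl | rfl
        · exact hx hab.2.1
        · exact hx hab.2.2
    omega

lemma sum_edges_in_H (hH : ∀ x y, H.Adj x y ↔ G.Adj x y ∧ x ∈ W ∧ y ∈ W)
    {m : V → ℕ} (hW : ∀ x, m x = 0 ∨ x ∈ W)
    {s : Multiset (Sym2 V)} (hs : ∀ e ∈ s, e ∈ G.edgeSet)
    (hle : (s.map edgeMon).sum ≤ m) : ∀ e ∈ s, e ∈ H.edgeSet := by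
  intro e he
  have h1 : edgeMon e ≤ (s.map edgeMon).sum :=
    Multiset.single_le_sum (fun f _ => fun x => Nat.zero_le _)
      _ (Multiset.mem_map_of_mem _ he)
  have hmem : ∀ x ∈ e, x ∈ W := by
    intro x hx
    have : 1 ≤ m x := by
      have := le_trans (h1 x) (hle x)
      simpa [edgeMon, hx] using this
    rcases hW x with h0 | h0
    · omega
    · exact h0
  have heG := hs e he
  revert heG hmem
  induction e using Sym2.ind with
  | _ a b =>
    intro hmem heG
    rw [SimpleGraph.mem_edgeSet] at heG ⊢
    exact (hH a b).mpr ⟨heG, hmem a (Sym2.mem_mk_left a b), hmem b (Sym2.mem_mk_right a b)⟩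

end Aux

section Main
variable {V : Type*} [DecidableEq V] {G H : SimpleGraph V} {W : Set V}
  [DecidablePred (· ∈ W)]

lemma minGen_HG (hH : ∀ x y, H.Adj x y ↔ G.Adj x y ∧ x ∈ W ∧ y ∈ W)
    {t : ℕ} {m : V → ℕ} (hm : IsMinGen H t m) : IsMinGen G t m := by
  obtain ⟨⟨s, hs, hcard, hsum⟩, hmin⟩ := hm
  have hW : ∀ x, m x = 0 ∨ x ∈ W := by
    intro x
    by_cases hx : x ∈ W
    · exact Or.inr hx
    · left
      have := edgeSum_bound hH ⟨s, hs, hcard, hsum⟩ x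
      simpa [hx] using this
  refine ⟨⟨s, ?_, hcard, hsum⟩, ?_⟩
  · intro e he
    have := hs e he
    revert this
    induction e using Sym2.ind with
    | _ a b =>
      intro hab
      rw [SimpleGraph.mem_edgeSet] at hab ⊢
      exact ((hH a b).mp hab).1
  · intro m' hm' hle
    obtain ⟨s', hs', hcard', hsum'⟩ := hm'
    have hle' : (s'.map edgeMon).sum ≤ m := hsum' ▸ hle
    exact hmin m' ⟨s', sum_edges_in_H hH hW hs' hle', hcard', hsum'⟩ hle

lemma minGen_GH (hH : ∀ x y, H.Adj x y ↔ G.Adj x y ∧ x ∈ W ∧ y ∈ W)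
    {t : ℕ} {m : V → ℕ} (hm : IsMinGen G t m)
    (hb : ∀ x, m x ≤ if x ∈ W then t else 0) : IsMinGen H t m := by
  obtain ⟨⟨s, hs, hcard, hsum⟩, hmin⟩ := hm
  have hW : ∀ x, m x = 0 ∨ x ∈ W := by
    intro x
    by_cases hx : x ∈ W
    · exact Or.inr hx
    · left
      have := hb x
      simp only [hx, if_false] at this
      omega
  refine ⟨⟨s, sum_edges_in_H hH hW hs (le_of_eq hsum), hcard, hsum⟩, ?_⟩
  intro m' hm' hle
  obtain ⟨s', hs', hcard', hsum'⟩ := hm'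
  refine hmin m' ⟨s', ?_, hcard', hsum'⟩ hle
  intro e he
  have := hs' e he
  revert this
  induction e using Sym2.ind with
  | _ a b =>
    intro hab
    rw [SimpleGraph.mem_edgeSet] at hab ⊢
    exact ((hH a b).mp hab).1

end Main

theorem stmt2 {V : Type*} [Fintype V] [DecidableEq V] (G H : SimpleGraph V)
    (W : Set V) [DecidablePred (· ∈ W)]
    (hH : ∀ x y, H.Adj x y ↔ G.Adj x y ∧ x ∈ W ∧ y ∈ W)
    (hnoiso : ∀ x ∈ W, ∃ y, H.Adj x y)
    (t : ℕ) (ht : 1 ≤ t) :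
    (∀ σ : Finset (V → ℕ), (∀ m ∈ σ, IsMinGen H t m) →
      ∃ τ : Finset (V → ℕ), (∀ m ∈ τ, IsMinGen G t m) ∧ mLcm τ = mLcm σ) ∧
    (∀ σ : Finset (V → ℕ), (∀ m ∈ σ, IsMinGen H t m) →
      (IsScarfPow H t σ ↔ IsScarfPow G t σ)) ∧
    (∀ σ : Finset (V → ℕ), IsScarfPow G t σ →
      (∀ m ∈ σ, ∀ x : V, m x ≤ (if x ∈ W then t else 0)) →
      (∀ m ∈ σ, IsMinGen H t m) ∧ IsScarfPow H t σ) := by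
  have hA : ∀ m : V → ℕ, IsMinGen H t m → IsMinGen G t m := fun m hm => minGen_HG hH hm
  have hB : ∀ m : V → ℕ, IsMinGen G t m → (∀ x, m x ≤ if x ∈ W then t else 0) →
      IsMinGen H t m := fun m hm hb => minGen_GH hH hm hb
  refine ⟨?_, ?_, ?_⟩
  · intro σ hσ
    exact ⟨σ, fun m hm => hA m (hσ m hm), rfl⟩
  · intro σ hσ
    constructor
    · intro hSH
      refine ⟨fun m hm => hA m (hσ m hm), ?_⟩
      intro τ hτ hlcm
      have hbσ : ∀ x, mLcm σ x ≤ if x ∈ W then t else 0 := by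
        intro x
        have : mLcm σ ≤ fun x => if x ∈ W then t else 0 :=
          Finset.sup_le fun m hm => edgeSum_bound hH (hσ m hm).1
        exact this x
      refine hSH.2 τ (fun m hm => hB m (hτ m hm) ?_) hlcm
      intro x
      calc m x ≤ mLcm τ x := Finset.le_sup (f := id) hm x
        _ = mLcm σ x := congrFun hlcm x
        _ ≤ _ := hbσ x
    · intro hSG
      exact ⟨hσ, fun τ hτ hlcm => hSG.2 τ (fun m hm => hA m (hτ m hm)) hlcm⟩
  · intro σ hSG hb
    have h1 : ∀ m ∈ σ, IsMinGen H t m := fun m hm => hB m (hSG.1 m hm) (hb m hm)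
    exact ⟨h1, h1, fun τ hτ hlcm => hSG.2 τ (fun m hm => hA m (hτ m hm)) hlcm⟩
end

section
/- Let G be a finite simple graph, let vw be an edge of G, and let G' be the graph obtained from G by removing the edge vw (keeping all vertices). If σ is a Scarf face of I(G') and σ ∪ {vw} is a Scarf face of I(G), then dist_G(e, vw) ≠ 1 for every edge e ∈ σ. -/
lemma one_le_eLcm {V : Type*} [DecidableEq V] {S : Finset (Sym2 V)} {f : Sym2 V} {u : V}
    (hu : u ∈ f) (hf : f ∈ S) : 1 ≤ eLcm S u := by
  have h := Finset.le_sup (f := edgeMon) hf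
  calc (1 : ℕ) = edgeMon f u := by simp [edgeMon, hu]
    _ ≤ eLcm S u := h u

lemma edgeMon_le {V : Type*} [DecidableEq V] {S : Finset (Sym2 V)} {a b : V}
    (ha : 1 ≤ eLcm S a) (hb : 1 ≤ eLcm S b) : edgeMon s(a, b) ≤ eLcm S := by
  intro u
  simp only [edgeMon]
  split
  · next h => rcases Sym2.mem_iff.mp h with rfl | rfl <;> assumption
  · exact Nat.zero_le _

theorem stmt3 {V : Type*} [Fintype V] [DecidableEq V] (G : SimpleGraph V) (v w : V)
    (hvw : G.Adj v w) (σ : Finset (Sym2 V))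
    (hσ : IsScarf (G.deleteEdges {s(v, w)}) σ)
    (hins : IsScarf G (insert s(v, w) σ)) :
    ∀ e ∈ σ, ¬ Dist1 G e s(v, w) := by
  rintro e he ⟨hnd0, x, hxe, y, hy, hadj⟩
  set T : Finset (Sym2 V) := insert s(v, w) σ with hT
  have hσG : ∀ f ∈ σ, f ∈ G.edgeSet := by
    intro f hf
    have := hσ.1 f hf
    rw [SimpleGraph.edgeSet_deleteEdges] at this
    exact this.1
  have hTG : ∀ f ∈ T, f ∈ G.edgeSet := by
    intro f hf
    rcases Finset.mem_insert.mp hf with rfl | hf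
    · exact hvw
    · exact hσG f hf
  have hxvw : x ∉ s(v, w) := fun hx => hnd0 ⟨x, hxe, hx⟩
  have hxy_ne : s(x, y) ≠ s(v, w) := by
    intro h
    exact hxvw (h ▸ Sym2.mem_mk_left x y)
  have he_ne : e ≠ s(x, y) := by
    intro h
    exact hnd0 ⟨y, h ▸ Sym2.mem_mk_right x y, hy⟩
  have heT : e ∈ T := Finset.mem_insert_of_mem he
  have hvwT : s(v, w) ∈ T := Finset.mem_insert_self _ _
  -- Step 1: s(x,y) ∈ σ
  have hx1 : 1 ≤ eLcm T x := one_le_eLcm hxe heT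
  have hy1 : 1 ≤ eLcm T y := one_le_eLcm hy hvwT
  have hle : edgeMon s(x, y) ≤ eLcm T := edgeMon_le hx1 hy1
  have hlcm1 : eLcm (insert s(x, y) T) = eLcm T := by
    unfold eLcm
    rw [Finset.sup_insert]
    exact sup_eq_right.mpr hle
  have hedges1 : ∀ f ∈ insert s(x, y) T, f ∈ G.edgeSet := by
    intro f hf
    rcases Finset.mem_insert.mp hf with rfl | hf
    · exact hadj
    · exact hTG f hf
  have hstep1 : insert s(x, y) T = T := hins.2 _ hedges1 hlcm1
  have hxyT : s(x, y) ∈ T := hstep1 ▸ Finset.mem_insert_self _ _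
  -- Step 2: erase s(x,y) from T, lcm unchanged, contradiction with Scarf
  have heτ : e ∈ T.erase s(x, y) := Finset.mem_erase.mpr ⟨he_ne, heT⟩
  have hvwτ : s(v, w) ∈ T.erase s(x, y) :=
    Finset.mem_erase.mpr ⟨fun h => hxy_ne h.symm, hvwT⟩
  have hle2 : edgeMon s(x, y) ≤ eLcm (T.erase s(x, y)) :=
    edgeMon_le (one_le_eLcm hxe heτ) (one_le_eLcm hy hvwτ)
  have hlcm2 : eLcm (T.erase s(x, y)) = eLcm T := by
    conv_rhs => rw [← Finset.insert_erase hxyT]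
    unfold eLcm
    rw [Finset.sup_insert]
    exact (sup_eq_right.mpr hle2).symm
  have hedges2 : ∀ f ∈ T.erase s(x, y), f ∈ G.edgeSet := fun f hf =>
    hTG f (Finset.mem_of_mem_erase hf)
  have hstep2 : T.erase s(x, y) = T := hins.2 _ hedges2 hlcm2
  have : s(x, y) ∈ T.erase s(x, y) := hstep2.symm ▸ hxyT
  exact (Finset.notMem_erase _ _) this
end

section
/- Let G be a finite simple graph, let vw be an edge of G, let G' be the graph obtained from G by removing the edge vw (keeping all vertices), and let σ be a Scarf face of I(G') such that dist_G(e, vw) ≠ 1 for all e ∈ σ. Then: (1) if dist_G(σ, vw) ≥ 2, then σ ∪ {vw} is a Scarf face of I(G); and (2) if dist_G(σ, vw) = 0, then σ ∪ {vw} is a Scarf face of I(G) if and only if (i) N_σ(w) = ∅ or N_σ(v) = ∅, and (ii) N_σ(w) ∩ N_G(v) = ∅ = N_σ(v) ∩ N_G(w). -/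
open Classical in
lemma eLcm_apply {V : Type*} [DecidableEq V] (σ : Finset (Sym2 V)) (x : V) :
    eLcm σ x = if ∃ e ∈ σ, x ∈ e then 1 else 0 := by
  rw [eLcm, Finset.sup_apply]
  split_ifs with h
  · obtain ⟨e, he, hx⟩ := h
    refine le_antisymm (Finset.sup_le fun e' _ => ?_) ?_
    · unfold edgeMon; split_ifs <;> simp
    · calc 1 = edgeMon e x := by unfold edgeMon; simp [hx]
        _ ≤ _ := Finset.le_sup (f := fun e => edgeMon e x) he
  · push_neg at h
    refine Nat.le_zero.mp (Finset.sup_le fun e he => ?_)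
    unfold edgeMon; simp [h e he]

lemma eLcm_eq_iff {V : Type*} [DecidableEq V] (σ τ : Finset (Sym2 V)) :
    eLcm τ = eLcm σ ↔ ∀ x, (∃ e ∈ τ, x ∈ e) ↔ (∃ e ∈ σ, x ∈ e) := by
  classical
  constructor
  · intro h x
    have := congrFun h x
    rw [eLcm_apply, eLcm_apply] at this
    by_cases h1 : ∃ e ∈ τ, x ∈ e <;> by_cases h2 : ∃ e ∈ σ, x ∈ e <;>
      simp [h1, h2] at this ⊢ <;> omega
  · intro h
    funext x
    rw [eLcm_apply, eLcm_apply, if_congr (h x) rfl rfl]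

lemma cov_vertex {V : Type*} {σ : Finset (Sym2 V)} {v : V} :
    (∃ e ∈ σ, v ∈ e) ↔ ∃ x, s(x, v) ∈ σ := by
  constructor
  · rintro ⟨e, he, hv⟩
    induction e using Sym2.ind with
    | _ a b =>
      rcases Sym2.mem_iff.mp hv with h | h <;> subst h
      · exact ⟨b, by rwa [Sym2.eq_swap]⟩
      · exact ⟨a, he⟩
  · rintro ⟨x, hx⟩; exact ⟨_, hx, Sym2.mem_mk_right x v⟩

lemma sym2_eq_of_mem {V : Type*} {e : Sym2 V} {x y : V} (hx : x ∈ e) (hy : y ∈ e)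
    (hxy : x ≠ y) : e = s(x, y) := by
  induction e using Sym2.ind with
  | _ a b =>
    rcases Sym2.mem_iff.mp hx with h | h <;> rcases Sym2.mem_iff.mp hy with h' | h' <;>
      subst h <;> first
      | (subst h'; first | exact absurd rfl hxy | rfl | exact Sym2.eq_swap)

lemma scarf_helper {V : Type*} [DecidableEq V] (G : SimpleGraph V) (v w : V)
    (hvw : G.Adj v w) (σ : Finset (Sym2 V))
    (hσ : IsScarf (G.deleteEdges {s(v, w)}) σ)
    (hd1 : ∀ e ∈ σ, ¬ Dist1 G e s(v, w))
    (hv : ∀ x, s(x, v) ∉ σ)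
    (hcross : ∀ x, s(x, w) ∈ σ → ¬ G.Adj v x) :
    IsScarf G (insert s(v, w) σ) := by
  obtain ⟨hσE, hσS⟩ := hσ
  have hσE' : ∀ e ∈ σ, e ∈ G.edgeSet ∧ e ≠ s(v, w) := by
    intro e he
    have := hσE e he
    rw [SimpleGraph.edgeSet_deleteEdges] at this
    exact ⟨this.1, this.2⟩
  -- no edge of σ contains v
  have hvσ : ∀ e ∈ σ, v ∉ e := by
    intro e he hve
    obtain ⟨x, hx⟩ := cov_vertex.mp ⟨e, he, hve⟩
    exact hv x hx
  have hne : v ≠ w := hvw.ne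
  constructor
  · intro e he
    rcases Finset.mem_insert.mp he with h | h
    · subst h; exact hvw
    · exact (hσE' e h).1
  intro τ hτE hlcm
  have hcov : ∀ x, (∃ e ∈ τ, x ∈ e) ↔ (x = v ∨ x = w ∨ ∃ e ∈ σ, x ∈ e) := by
    intro x
    rw [(eLcm_eq_iff _ _).mp hlcm x]
    constructor
    · rintro ⟨e, he, hx⟩
      rcases Finset.mem_insert.mp he with h | h
      · subst h; rcases Sym2.mem_iff.mp hx with h | h
        · exact Or.inl h
        · exact Or.inr (Or.inl h)
      · exact Or.inr (Or.inr ⟨e, h, hx⟩)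
    · rintro (h | h | ⟨e, he, hx⟩)
      · exact ⟨s(v,w), Finset.mem_insert_self _ _, by rw [h]; exact Sym2.mem_mk_left v w⟩
      · exact ⟨s(v,w), Finset.mem_insert_self _ _, by rw [h]; exact Sym2.mem_mk_right v w⟩
      · exact ⟨e, Finset.mem_insert_of_mem he, hx⟩
  -- any edge of τ containing v equals s(v,w)
  have hVonly : ∀ e ∈ τ, v ∈ e → e = s(v, w) := by
    have key : ∀ b, s(v, b) ∈ τ → b = w := by
      intro b he
      have hadj : G.Adj v b := hτE _ he
      have hbτ : b ∈ s(v, b) := Sym2.mem_mk_right v b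
      by_cases hbw : b = w
      · exact hbw
      rcases (hcov b).mp ⟨_, he, hbτ⟩ with h | h | ⟨e', he', hbe'⟩
      · exact absurd h.symm hadj.ne
      · exact h
      · exfalso
        by_cases hwe' : w ∈ e'
        · have : e' = s(b, w) := sym2_eq_of_mem hbe' hwe' hbw
          exact hcross b (this ▸ he') hadj
        · exact hd1 e' he' ⟨fun ⟨x, hx1, hx2⟩ => by
            rcases Sym2.mem_iff.mp hx2 with h | h
            · exact hvσ e' he' (h ▸ hx1)
            · exact hwe' (h ▸ hx1),
            b, hbe', v, Sym2.mem_mk_left v w, hadj.symm⟩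
    intro e he hve
    induction e using Sym2.ind with
    | _ a b =>
      rcases Sym2.mem_iff.mp hve with h | h
      · subst h
        rw [key b he]
      · subst h
        rw [Sym2.eq_swap] at he ⊢
        rw [key a he]
  have hvwτ : s(v, w) ∈ τ := by
    obtain ⟨e, he, hve⟩ := (hcov v).mpr (Or.inl rfl)
    exact hVonly e he hve ▸ he
  set τ' := τ.erase s(v, w) with hτ'def
  have hτ'v : ∀ e ∈ τ', v ∉ e := by
    intro e he hve
    exact (Finset.mem_erase.mp he).1 (hVonly e (Finset.mem_erase.mp he).2 hve)
  have hτ'E : ∀ e ∈ τ', e ∈ (G.deleteEdges {s(v, w)}).edgeSet := by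
    intro e he
    rw [SimpleGraph.edgeSet_deleteEdges]
    exact ⟨hτE e (Finset.mem_erase.mp he).2, (Finset.mem_erase.mp he).1⟩
  have hτins : τ = insert s(v, w) τ' := by
    rw [hτ'def, Finset.insert_erase hvwτ]
  by_cases hW : ∃ a, s(a, w) ∈ σ
  · -- case: σ covers w
    obtain ⟨a, haσ⟩ := hW
    have haw : a ≠ w := by
      intro h; subst h
      exact (hσE' _ haσ).1.ne rfl
    have hav' : a ≠ v := by
      intro h; subst h
      exact hv w (Sym2.eq_swap ▸ haσ)
    -- only σ-edge containing a is s(a,w)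
    have haonly : ∀ e ∈ σ, a ∈ e → e = s(a, w) := by
      intro e he hae
      by_cases hwe : w ∈ e
      · exact sym2_eq_of_mem hae hwe haw
      · exfalso
        exact hd1 e he ⟨fun ⟨x, hx1, hx2⟩ => by
          rcases Sym2.mem_iff.mp hx2 with h | h
          · exact hvσ e he (h ▸ hx1)
          · exact hwe (h ▸ hx1),
          a, hae, w, Sym2.mem_mk_right v w, ((hσE' _ haσ).1 : G.Adj a w)⟩
    set τ'' := insert s(a, w) τ' with hτ''def
    have hτ''σ : τ'' = σ := by
      apply hσS
      · intro e he
        rcases Finset.mem_insert.mp he with h | h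
        · subst h
          exact hσE _ haσ
        · exact hτ'E e h
      · rw [eLcm_eq_iff]
        intro x
        constructor
        · rintro ⟨e, he, hx⟩
          rcases Finset.mem_insert.mp he with h | h
          · subst h
            exact ⟨s(a, w), haσ, hx⟩
          · have hx' := (hcov x).mp ⟨e, (Finset.mem_erase.mp h).2, hx⟩
            rcases hx' with h' | h' | h'
            · exact absurd (h' ▸ hx) (hτ'v e h)
            · exact ⟨s(a, w), haσ, h' ▸ Sym2.mem_mk_right a w⟩
            · exact h'
        · rintro ⟨e, he, hx⟩
          have := (hcov x).mpr (Or.inr (Or.inr ⟨e, he, hx⟩))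
          obtain ⟨f, hf, hxf⟩ := this
          by_cases hfvw : f = s(v, w)
          · subst hfvw
            rcases Sym2.mem_iff.mp hxf with h | h
            · exact absurd (h ▸ hx) (hvσ e he)
            · exact ⟨s(a, w), Finset.mem_insert_self _ _, h ▸ Sym2.mem_mk_right a w⟩
          · exact ⟨f, Finset.mem_insert_of_mem (Finset.mem_erase.mpr ⟨hfvw, hf⟩), hxf⟩
    by_cases hmem : s(a, w) ∈ τ'
    · have : τ' = σ := by
        rw [← hτ''σ, hτ''def, Finset.insert_eq_self.mpr hmem]
      rw [hτins, this]
    · exfalso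
      have hτ'eq : τ' = σ.erase s(a, w) := by
        rw [← hτ''σ, hτ''def, Finset.erase_insert hmem]
      -- a must be covered by τ
      obtain ⟨e, he, hae⟩ := (hcov a).mpr (Or.inr (Or.inr ⟨s(a, w), haσ, Sym2.mem_mk_left a w⟩))
      by_cases hevw : e = s(v, w)
      · subst hevw
        rcases Sym2.mem_iff.mp hae with h | h
        · exact hav' h
        · exact haw h
      · have heτ' : e ∈ τ' := Finset.mem_erase.mpr ⟨hevw, he⟩
        have heσ : e ∈ σ := Finset.mem_of_mem_erase (hτ'eq ▸ heτ')
        have := haonly e heσ hae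
        rw [hτ'eq] at heτ'
        exact (Finset.mem_erase.mp heτ').1 this
  · -- case: σ covers neither v nor w
    push_neg at hW
    have hwσ : ∀ e ∈ σ, w ∉ e := by
      intro e he hwe
      obtain ⟨x, hx⟩ := cov_vertex.mp ⟨e, he, hwe⟩
      exact hW x hx
    have keyW : ∀ b, s(w, b) ∈ τ → b = v := by
      intro b he
      have hadj : G.Adj w b := hτE _ he
      rcases (hcov b).mp ⟨_, he, Sym2.mem_mk_right w b⟩ with h | h | ⟨e', he', hbe'⟩
      · exact h
      · exact absurd h.symm hadj.ne
      · exact absurd ⟨fun ⟨y, hy1, hy2⟩ => by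
          rcases Sym2.mem_iff.mp hy2 with h | h
          · exact hvσ e' he' (h ▸ hy1)
          · exact hwσ e' he' (h ▸ hy1),
          b, hbe', w, Sym2.mem_mk_right v w, hadj.symm⟩ (hd1 e' he')
    have hWonly : ∀ e ∈ τ, w ∈ e → e = s(v, w) := by
      intro e he hwe
      induction e using Sym2.ind with
      | _ a b =>
        rcases Sym2.mem_iff.mp hwe with h | h
        · subst h
          rw [keyW b he, Sym2.eq_swap]
        · subst h
          rw [Sym2.eq_swap] at he ⊢
          rw [keyW a he, Sym2.eq_swap]
    have hτ'σ : τ' = σ := by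
      apply hσS _ hτ'E
      rw [eLcm_eq_iff]
      intro x
      constructor
      · rintro ⟨e, he, hx⟩
        have hx' := (hcov x).mp ⟨e, (Finset.mem_erase.mp he).2, hx⟩
        rcases hx' with h' | h' | h'
        · exact absurd (h' ▸ hx) (hτ'v e he)
        · exact absurd (hWonly e (Finset.mem_erase.mp he).2 (h' ▸ hx))
            (Finset.mem_erase.mp he).1
        · exact h'
      · rintro ⟨e, he, hx⟩
        obtain ⟨f, hf, hxf⟩ := (hcov x).mpr (Or.inr (Or.inr ⟨e, he, hx⟩))
        by_cases hfvw : f = s(v, w)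
        · exfalso
          subst hfvw
          rcases Sym2.mem_iff.mp hxf with h | h
          · exact hvσ e he (h ▸ hx)
          · exact hwσ e he (h ▸ hx)
        · exact ⟨f, Finset.mem_erase.mpr ⟨hfvw, hf⟩, hxf⟩
    rw [hτins, hτ'σ]

lemma scarf_aux2 {V : Type*} [DecidableEq V] (G : SimpleGraph V) (v w a : V)
    (hvw : G.Adj v w) (σ : Finset (Sym2 V))
    (hσE : ∀ e ∈ σ, e ∈ (G.deleteEdges {s(v, w)}).edgeSet)
    (hS : IsScarf G (insert s(v, w) σ))
    (ha : s(a, w) ∈ σ) (hadj : G.Adj v a) : False := by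
  obtain ⟨hSE, hSS⟩ := hS
  have hσE' : ∀ e ∈ σ, e ∈ G.edgeSet ∧ e ≠ s(v, w) := by
    intro e he
    have := hσE e he
    rw [SimpleGraph.edgeSet_deleteEdges] at this
    exact ⟨this.1, this.2⟩
  have hawG : G.Adj a w := (hσE' _ ha).1
  have haw : a ≠ w := hawG.ne
  have hav : a ≠ v := hadj.ne'
  have hwv : w ≠ v := hvw.ne'
  set τ : Finset (Sym2 V) := insert s(v, w) (insert s(a, v) (σ.erase s(a, w))) with hτdef
  have hτeq : τ = insert s(v, w) σ := by
    apply hSS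
    · intro e he
      rcases Finset.mem_insert.mp he with h | h
      · subst h; exact hvw
      rcases Finset.mem_insert.mp h with h' | h'
      · subst h'; exact hadj.symm
      · exact (hσE' e (Finset.mem_of_mem_erase h')).1
    · rw [eLcm_eq_iff]
      intro x
      constructor
      · rintro ⟨e, he, hx⟩
        rcases Finset.mem_insert.mp he with h | h
        · exact ⟨s(v, w), Finset.mem_insert_self _ _, h ▸ hx⟩
        rcases Finset.mem_insert.mp h with h' | h'
        · subst h'
          rcases Sym2.mem_iff.mp hx with h'' | h''
          · exact ⟨s(a, w), Finset.mem_insert_of_mem ha, h'' ▸ Sym2.mem_mk_left a w⟩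
          · exact ⟨s(v, w), Finset.mem_insert_self _ _, h'' ▸ Sym2.mem_mk_left v w⟩
        · exact ⟨e, Finset.mem_insert_of_mem (Finset.mem_of_mem_erase h'), hx⟩
      · rintro ⟨e, he, hx⟩
        rcases Finset.mem_insert.mp he with h | h
        · exact ⟨s(v, w), Finset.mem_insert_self _ _, h ▸ hx⟩
        by_cases haw' : e = s(a, w)
        · subst haw'
          rcases Sym2.mem_iff.mp hx with h'' | h''
          · exact ⟨s(a, v), Finset.mem_insert_of_mem (Finset.mem_insert_self _ _),
              h'' ▸ Sym2.mem_mk_left a v⟩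
          · exact ⟨s(v, w), Finset.mem_insert_self _ _, h'' ▸ Sym2.mem_mk_right v w⟩
        · exact ⟨e, Finset.mem_insert_of_mem (Finset.mem_insert_of_mem
            (Finset.mem_erase.mpr ⟨haw', h⟩)), hx⟩
  have hmem : s(a, w) ∈ τ := hτeq ▸ Finset.mem_insert_of_mem ha
  rw [hτdef] at hmem
  rcases Finset.mem_insert.mp hmem with h | h
  · rcases Sym2.eq_iff.mp h with ⟨h1, _⟩ | ⟨h1, _⟩
    · exact hav h1
    · exact haw h1
  rcases Finset.mem_insert.mp h with h' | h'
  · rcases Sym2.eq_iff.mp h' with ⟨_, h2⟩ | ⟨h1, _⟩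
    · exact hwv h2
    · exact hav h1
  · exact (Finset.mem_erase.mp h').1 rfl

theorem stmt4 {V : Type*} [Fintype V] [DecidableEq V] (G : SimpleGraph V) (v w : V)
    (hvw : G.Adj v w) (σ : Finset (Sym2 V))
    (hσ : IsScarf (G.deleteEdges {s(v, w)}) σ)
    (hd1 : ∀ e ∈ σ, ¬ Dist1 G e s(v, w)) :
    ((∀ e ∈ σ, ¬ Dist0 e s(v, w) ∧ ¬ Dist1 G e s(v, w)) →
        IsScarf G (insert s(v, w) σ)) ∧
    ((∃ e ∈ σ, Dist0 e s(v, w)) →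
      (IsScarf G (insert s(v, w) σ) ↔
        (({x : V | s(x, w) ∈ σ} = ∅ ∨ {x : V | s(x, v) ∈ σ} = ∅) ∧
          {x : V | s(x, w) ∈ σ} ∩ G.neighborSet v = ∅ ∧
          {x : V | s(x, v) ∈ σ} ∩ G.neighborSet w = ∅))) := by
  have hσE' : ∀ e ∈ σ, e ∈ G.edgeSet ∧ e ≠ s(v, w) := by
    intro e he
    have := hσ.1 e he
    rw [SimpleGraph.edgeSet_deleteEdges] at this
    exact ⟨this.1, this.2⟩
  have hswap : (s(w, v) : Sym2 V) = s(v, w) := Sym2.eq_swap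
  have hsetswap : ({s(w, v)} : Set (Sym2 V)) = {s(v, w)} := by rw [hswap]
  constructor
  · intro h
    refine scarf_helper G v w hvw σ hσ hd1 ?_ ?_
    · intro x hx
      exact (h _ hx).1 ⟨v, Sym2.mem_mk_right x v, Sym2.mem_mk_left v w⟩
    · intro x hx _
      exact (h _ hx).1 ⟨w, Sym2.mem_mk_right x w, Sym2.mem_mk_right v w⟩
  · intro _
    constructor
    · intro hS
      refine ⟨?_, ?_, ?_⟩
      · by_contra hcon
        push_neg at hcon
        obtain ⟨a, ha⟩ := hcon.1
        obtain ⟨b, hb⟩ := hcon.2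
        have ha : s(a, w) ∈ σ := ha
        have hb : s(b, v) ∈ σ := hb
        have hvwσ : s(v, w) ∉ σ := fun hm => (hσE' _ hm).2 rfl
        have := hS.2 σ (fun e he => (hσE' e he).1) ?_
        · exact hvwσ (this ▸ Finset.mem_insert_self s(v, w) σ)
        · rw [eLcm_eq_iff]
          intro x
          constructor
          · rintro ⟨e, he, hx⟩
            exact ⟨e, Finset.mem_insert_of_mem he, hx⟩
          · rintro ⟨e, he, hx⟩
            rcases Finset.mem_insert.mp he with h | h
            · subst h
              rcases Sym2.mem_iff.mp hx with h' | h'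
              · exact ⟨s(b, v), hb, h' ▸ Sym2.mem_mk_right b v⟩
              · exact ⟨s(a, w), ha, h' ▸ Sym2.mem_mk_right a w⟩
            · exact ⟨e, h, hx⟩
      · rw [Set.eq_empty_iff_forall_notMem]
        rintro a ⟨ha1, ha2⟩
        exact scarf_aux2 G v w a hvw σ hσ.1 hS ha1 ha2
      · rw [Set.eq_empty_iff_forall_notMem]
        rintro a ⟨ha1, ha2⟩
        refine scarf_aux2 G w v a hvw.symm σ ?_ ?_ ha1 ha2
        · rw [hsetswap]; exact hσ.1
        · rwa [hswap]
    · rintro ⟨hi, hii1, hii2⟩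
      rcases hi with h | h
      · -- N_σ(w) = ∅ : swap roles of v and w
        have key := scarf_helper G w v hvw.symm σ ?_ ?_ ?_ ?_
        · rwa [hswap] at key
        · rwa [hsetswap]
        · rwa [hswap]
        · intro x hx
          exact Set.eq_empty_iff_forall_notMem.mp h x hx
        · intro x hx hadj
          exact Set.eq_empty_iff_forall_notMem.mp hii2 x ⟨hx, hadj⟩
      · exact scarf_helper G v w hvw σ hσ hd1
          (fun x hx => Set.eq_empty_iff_forall_notMem.mp h x hx)
          (fun x hx hadj => Set.eq_empty_iff_forall_notMem.mp hii1 x ⟨hx, hadj⟩)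
end

section
/- Let G be a finite simple graph, v a vertex of G, and G' = G − v the induced subgraph obtained by deleting v and all edges incident to v. Let σ be a Scarf face of I(G'), let w_1, …, w_t (t ≥ 1) be distinct elements of N_G(v), and suppose dist_G(σ, vw_i) ≥ 2 for all 1 ≤ i ≤ t. Then: (1) if w_i w_j ∈ E(G) for some i ≠ j, then σ ∪ {vw_1, …, vw_t} is not a Scarf face of I(G' ∪ {vw_1, …, vw_t}); and (2) if w_i w_j ∉ E(G) for all i ≠ j, then σ ∪ {vw_1, …, vw_t} is a Scarf face of I(G' ∪ {vw_1, …, vw_t}) and also a Scarf face of I(G). Here G' ∪ {vw_1, …, vw_t} denotes the subgraph of G obtained from G' by adding back the vertex v and the edges vw_1, …, vw_t. -/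
/-- The graph `G - v`: delete the vertex `v`, i.e. all edges incident to `v`
(keeping the vertex set). -/
def delVert {V : Type*} (G : SimpleGraph V) (v : V) : SimpleGraph V where
  Adj x y := G.Adj x y ∧ x ≠ v ∧ y ≠ v
  symm := ⟨fun x y h => ⟨h.1.symm, h.2.2, h.2.1⟩⟩
  loopless := ⟨fun x h => G.irrefl h.1⟩

/-- The graph `G' ∪ {vw₁, …, vwₜ}`: obtained from `G - v` by adding back the vertex `v`
and the edges `vw` for `w ∈ W`. -/
def addBack {V : Type*} (G : SimpleGraph V) (v : V) (W : Finset V) : SimpleGraph V :=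
  SimpleGraph.fromEdgeSet ((delVert G v).edgeSet ∪ {e : Sym2 V | ∃ w ∈ W, e = s(v, w)})

def eSupp {V : Type*} (σ : Finset (Sym2 V)) : Set V := {x | ∃ e ∈ σ, x ∈ e}

section Scarf

variable {V : Type*}

@[simp]
lemma mem_eSupp {σ : Finset (Sym2 V)} {x : V} : x ∈ eSupp σ ↔ ∃ e ∈ σ, x ∈ e := Iff.rfl

lemma eSupp_union [DecidableEq V] (σ τ : Finset (Sym2 V)) :
    eSupp (σ ∪ τ) = eSupp σ ∪ eSupp τ := by
  ext x
  simp only [mem_eSupp, Finset.mem_union, Set.mem_union, or_and_right, exists_or]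

lemma eSupp_mono {σ τ : Finset (Sym2 V)} (h : σ ⊆ τ) : eSupp σ ⊆ eSupp τ :=
  fun _ ⟨e, he, hx⟩ => ⟨e, h he, hx⟩

lemma mem_eSupp_of_mem {σ : Finset (Sym2 V)} {e : Sym2 V} (he : e ∈ σ) {x : V} (hx : x ∈ e) :
    x ∈ eSupp σ :=
  ⟨e, he, hx⟩

variable [DecidableEq V]

lemma eLcm_eq_indicator (σ : Finset (Sym2 V)) : eLcm σ = (eSupp σ).indicator 1 := by
  funext x
  rw [eLcm, Finset.sup_apply]
  by_cases hx : x ∈ eSupp σ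
  · obtain ⟨e, he, hxe⟩ := hx
    rw [Set.indicator_of_mem (mem_eSupp_of_mem he hxe)]
    refine le_antisymm (Finset.sup_le fun f _ => ?_) ?_
    · unfold edgeMon; split <;> simp
    · exact le_trans (by simp [edgeMon, hxe]) (Finset.le_sup (f := fun f => edgeMon f x) he)
  · rw [Set.indicator_of_notMem hx]
    refine Nat.eq_zero_of_le_zero (Finset.sup_le fun e he => ?_)
    have hxe : x ∉ e := fun hxe => hx (mem_eSupp_of_mem he hxe)
    simp [edgeMon, hxe]

lemma eLcm_eq_eLcm_iff {σ τ : Finset (Sym2 V)} : eLcm τ = eLcm σ ↔ eSupp τ = eSupp σ := by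
  simp only [eLcm_eq_indicator]
  exact ⟨Set.indicator_one_inj ℕ, fun h => h ▸ rfl⟩

lemma isScarf_iff {G : SimpleGraph V} {σ : Finset (Sym2 V)} :
    IsScarf G σ ↔ (∀ e ∈ σ, e ∈ G.edgeSet) ∧
      ∀ τ : Finset (Sym2 V), (∀ e ∈ τ, e ∈ G.edgeSet) → eSupp τ = eSupp σ → τ = σ := by
  simp only [IsScarf, eLcm_eq_eLcm_iff]

namespace IsScarf

variable {G G' H : SimpleGraph V} {σ S : Finset (Sym2 V)}

lemma of_le (hσ : IsScarf G σ) (hHG : H ≤ G) (hσH : ∀ e ∈ σ, e ∈ H.edgeSet) : IsScarf H σ :=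
  ⟨hσH, fun τ hτ => hσ.2 τ fun e he => SimpleGraph.edgeSet_subset_edgeSet.mpr hHG (hτ e he)⟩

lemma mem_of_forall_mem_eSupp (hσ : IsScarf G σ) {e : Sym2 V} (he : e ∈ G.edgeSet)
    (heσ : ∀ x ∈ e, x ∈ eSupp σ) : e ∈ σ := by
  have hsupp : eSupp (insert e σ) = eSupp σ := by
    rw [Finset.insert_eq, eSupp_union]
    exact Set.union_eq_right.mpr fun x ⟨f, hf, hx⟩ => heσ x (Finset.mem_singleton.mp hf ▸ hx)
  have hτ : ∀ f ∈ insert e σ, f ∈ G.edgeSet := by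
    intro f hf
    rcases Finset.mem_insert.mp hf with rfl | hf
    exacts [he, hσ.1 f hf]
  rw [← (isScarf_iff.mp hσ).2 _ hτ hsupp]
  exact Finset.mem_insert_self e σ

lemma union (hσ : IsScarf G' σ) (hdisj : Disjoint (eSupp σ) (eSupp S))
    (hS : ∀ T ⊆ S, eSupp T = eSupp S → T = S) (hσS : ∀ e ∈ σ ∪ S, e ∈ H.edgeSet)
    (hHS : ∀ e ∈ H.edgeSet, (∀ x ∈ e, x ∈ eSupp (σ ∪ S)) → (∃ x ∈ e, x ∈ eSupp S) → e ∈ S)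
    (hHG' : ∀ e ∈ H.edgeSet, (∀ x ∈ e, x ∈ eSupp σ) → e ∈ G'.edgeSet) :
    IsScarf H (σ ∪ S) := by
  refine isScarf_iff.mpr ⟨hσS, fun τ hτH hτ => ?_⟩
  have hτσ : ∀ e ∈ τ, e ∉ S → ∀ x ∈ e, x ∈ eSupp σ := by
    intro e he heS x hx
    have hcov : ∀ y ∈ e, y ∈ eSupp (σ ∪ S) := fun y hy => hτ ▸ mem_eSupp_of_mem he hy
    rcases (eSupp_union σ S ▸ hcov x hx : x ∈ eSupp σ ∪ eSupp S) with h | h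
    · exact h
    · exact absurd (hHS e (hτH e he) hcov ⟨x, hx, h⟩) heS
  set τS := τ.filter (· ∈ S)
  set τσ := τ.filter (· ∉ S)
  have hτS : τS ⊆ S := fun e he => (Finset.mem_filter.mp he).2
  have hτσ_supp : eSupp τσ ⊆ eSupp σ := fun x ⟨e, he, hx⟩ =>
    hτσ e (Finset.mem_filter.mp he).1 (Finset.mem_filter.mp he).2 x hx
  have hsplit : eSupp τS ∪ eSupp τσ = eSupp S ∪ eSupp σ := by
    rw [← eSupp_union, Finset.filter_union_filter_not_eq, hτ, eSupp_union, Set.union_comm]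
  have hτσ_eq : eSupp τσ = eSupp σ := by
    refine hτσ_supp.antisymm fun x hx => ?_
    rcases (hsplit ▸ Or.inr hx : x ∈ eSupp τS ∪ eSupp τσ) with h | h
    · exact absurd (eSupp_mono hτS h) (Set.disjoint_left.mp hdisj hx)
    · exact h
  have hτS_eq : eSupp τS = eSupp S := by
    refine (eSupp_mono hτS).antisymm fun x hx => ?_
    rcases (hsplit ▸ Or.inl hx : x ∈ eSupp τS ∪ eSupp τσ) with h | h
    · exact h
    · exact absurd (hτσ_supp h) (Set.disjoint_right.mp hdisj hx)
  have hτσG' : ∀ e ∈ τσ, e ∈ G'.edgeSet := fun e he =>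
    hHG' e (hτH e (Finset.mem_filter.mp he).1) fun x hx => hτσ_supp (mem_eSupp_of_mem he hx)
  rw [← Finset.filter_union_filter_not_eq (· ∈ S) τ, Finset.union_comm]
  exact congrArg₂ (· ∪ ·) ((isScarf_iff.mp hσ).2 τσ hτσG' hτσ_eq) (hS τS hτS hτS_eq)

end IsScarf

end Scarf

section Star

variable {V : Type*} {G : SimpleGraph V} {σ S : Finset (Sym2 V)}

lemma disjoint_eSupp_of_not_dist0 (h : ∀ f ∈ S, ∀ e ∈ σ, ¬ Dist0 e f) :
    Disjoint (eSupp σ) (eSupp S) :=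
  Set.disjoint_left.mpr fun x ⟨e, he, hxe⟩ ⟨f, hf, hxf⟩ => h f hf e he ⟨x, hxe, hxf⟩

lemma not_adj_of_not_dist (h : ∀ f ∈ S, ∀ e ∈ σ, ¬ Dist0 e f ∧ ¬ Dist1 G e f) {x y : V}
    (hx : x ∈ eSupp σ) (hy : y ∈ eSupp S) : ¬ G.Adj x y := by
  obtain ⟨e, he, hxe⟩ := hx
  obtain ⟨f, hf, hyf⟩ := hy
  exact fun hxy => (h f hf e he).2 ⟨(h f hf e he).1, x, hxe, y, hyf, hxy⟩

variable [DecidableEq V] {v : V} {W : Finset V}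

lemma mem_eSupp_image_mk {x : V} :
    x ∈ eSupp (W.image fun w => s(v, w)) ↔ ∃ w ∈ W, x = v ∨ x = w := by
  simp [Sym2.mem_iff]

lemma eq_image_mk_of_eSupp_eq (hvW : v ∉ W) {T : Finset (Sym2 V)}
    (hT : T ⊆ W.image fun w => s(v, w)) (h : eSupp T = eSupp (W.image fun w => s(v, w))) :
    T = W.image fun w => s(v, w) := by
  refine hT.antisymm (Finset.image_subset_iff.mpr fun w hw => ?_)
  obtain ⟨e, he, hwe⟩ : w ∈ eSupp T := h ▸ mem_eSupp_image_mk.mpr ⟨w, hw, Or.inr rfl⟩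
  obtain ⟨u, -, rfl⟩ := Finset.mem_image.mp (hT he)
  rcases Sym2.mem_iff.mp hwe with rfl | rfl
  · exact absurd hw hvW
  · exact he

lemma mk_mem_image_mk_of_adj (hind : ∀ w ∈ W, ∀ w' ∈ W, w ≠ w' → ¬ G.Adj w w') {a b : V}
    (hab : G.Adj a b) (ha : a ∈ eSupp (W.image fun w => s(v, w)))
    (hb : b ∈ eSupp (W.image fun w => s(v, w))) : s(a, b) ∈ W.image fun w => s(v, w) := by
  obtain ⟨w, hw, rfl | rfl⟩ := mem_eSupp_image_mk.mp ha <;>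
    obtain ⟨w', hw', rfl | rfl⟩ := mem_eSupp_image_mk.mp hb
  · exact absurd hab (G.loopless.irrefl _)
  · exact Finset.mem_image_of_mem _ hw'
  · exact Sym2.eq_swap ▸ Finset.mem_image_of_mem _ hw
  · exact absurd hab (hind a hw b hw' hab.ne)

lemma mem_image_mk_of_mem_edgeSet (hind : ∀ w ∈ W, ∀ w' ∈ W, w ≠ w' → ¬ G.Adj w w')
    (hd : ∀ f ∈ W.image (fun w => s(v, w)), ∀ e ∈ σ, ¬ Dist0 e f ∧ ¬ Dist1 G e f)
    {e : Sym2 V} (he : e ∈ G.edgeSet)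
    (hcov : ∀ x ∈ e, x ∈ eSupp σ ∪ eSupp (W.image fun w => s(v, w)))
    (hmeet : ∃ x ∈ e, x ∈ eSupp (W.image fun w => s(v, w))) :
    e ∈ W.image fun w => s(v, w) := by
  induction e using Sym2.ind with
  | _ a b =>
    have key : ∀ {a b : V}, G.Adj a b → a ∈ eSupp (W.image fun w => s(v, w)) →
        b ∈ eSupp σ ∪ eSupp (W.image fun w => s(v, w)) → s(a, b) ∈ W.image fun w => s(v, w) :=
      fun hab ha hb => hb.elim (fun hb => absurd hab.symm (not_adj_of_not_dist hd hb ha))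
        (mk_mem_image_mk_of_adj hind hab ha)
    obtain ⟨x, hx, hxS⟩ := hmeet
    rcases Sym2.mem_iff.mp hx with rfl | rfl
    · exact key he hxS (hcov b (Sym2.mem_mk_right _ _))
    · exact Sym2.eq_swap ▸ key (G.adj_symm he) hxS (hcov a (Sym2.mem_mk_left _ _))

end Star

section DeleteVertex

variable {V : Type*} {G : SimpleGraph V} {v : V} {W : Finset V}

lemma mem_edgeSet_delVert {e : Sym2 V} : e ∈ (delVert G v).edgeSet ↔ e ∈ G.edgeSet ∧ v ∉ e := by
  induction e using Sym2.ind with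
  | _ a b => simp [delVert, Sym2.mem_iff, eq_comm]

lemma delVert_le_addBack : delVert G v ≤ addBack G v W :=
  fun _ _ h => (SimpleGraph.fromEdgeSet_adj _).mpr ⟨Or.inl h, h.1.ne⟩

lemma addBack_le (hW : ∀ w ∈ W, G.Adj v w) : addBack G v W ≤ G := by
  intro a b h
  obtain ⟨h | ⟨w, hw, hab⟩, -⟩ := (SimpleGraph.fromEdgeSet_adj _).mp h
  · exact h.1
  · exact G.mem_edgeSet.mp (hab ▸ hW w hw)

lemma mk_mem_edgeSet_addBack {w : V} (hw : w ∈ W) (hvw : v ≠ w) :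
    s(v, w) ∈ (addBack G v W).edgeSet :=
  (SimpleGraph.fromEdgeSet_adj _).mpr ⟨Or.inr ⟨w, hw, rfl⟩, hvw⟩

lemma union_image_mk_subset_edgeSet_addBack [DecidableEq V] {σ : Finset (Sym2 V)}
    (hσ : ∀ e ∈ σ, e ∈ (delVert G v).edgeSet) (hvW : v ∉ W) :
    ∀ e ∈ σ ∪ W.image (fun w => s(v, w)), e ∈ (addBack G v W).edgeSet := by
  intro e he
  rcases Finset.mem_union.mp he with he | he
  · exact SimpleGraph.edgeSet_subset_edgeSet.mpr delVert_le_addBack (hσ e he)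
  · obtain ⟨w, hw, rfl⟩ := Finset.mem_image.mp he
    exact mk_mem_edgeSet_addBack hw (ne_of_mem_of_not_mem hw hvW).symm

lemma not_isScarf_addBack_of_adj [DecidableEq V] {σ : Finset (Sym2 V)} (hvW : v ∉ W)
    (hdisj : Disjoint (eSupp σ) (eSupp (W.image fun w => s(v, w))))
    {w w' : V} (hw : w ∈ W) (hw' : w' ∈ W) (hww' : G.Adj w w') :
    ¬ IsScarf (addBack G v W) (σ ∪ W.image (fun w => s(v, w))) := by
  intro hU
  have hwS : ∀ {u}, u ∈ W → u ∈ eSupp (W.image fun w => s(v, w)) :=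
    fun hu => mem_eSupp_image_mk.mpr ⟨_, hu, Or.inr rfl⟩
  have hmem := hU.mem_of_forall_mem_eSupp (e := s(w, w'))
    (delVert_le_addBack ⟨hww', ne_of_mem_of_not_mem hw hvW, ne_of_mem_of_not_mem hw' hvW⟩)
    (fun x hx => by
      rw [eSupp_union]
      rcases Sym2.mem_iff.mp hx with rfl | rfl
      exacts [Or.inr (hwS hw), Or.inr (hwS hw')])
  rcases Finset.mem_union.mp hmem with h | h
  · exact Set.disjoint_left.mp hdisj (mem_eSupp_of_mem h (Sym2.mem_mk_left w w')) (hwS hw)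
  · obtain ⟨u, -, hu⟩ := Finset.mem_image.mp h
    rcases Sym2.mem_iff.mp (hu ▸ Sym2.mem_mk_left v u) with rfl | rfl
    exacts [hvW hw, hvW hw']

end DeleteVertex

theorem stmt6_general {V : Type*} [DecidableEq V] (G : SimpleGraph V) (v : V)
    (W : Finset V) (hW : ∀ w ∈ W, G.Adj v w)
    (σ : Finset (Sym2 V)) (hσ : IsScarf (delVert G v) σ)
    (hd : ∀ w ∈ W, ∀ e ∈ σ, ¬ Dist0 e s(v, w) ∧ ¬ Dist1 G e s(v, w)) :
    ((∃ w ∈ W, ∃ w' ∈ W, w ≠ w' ∧ G.Adj w w') →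
        ¬ IsScarf (addBack G v W) (σ ∪ W.image (fun w => s(v, w)))) ∧
    ((∀ w ∈ W, ∀ w' ∈ W, w ≠ w' → ¬ G.Adj w w') →
        IsScarf (addBack G v W) (σ ∪ W.image (fun w => s(v, w))) ∧
          IsScarf G (σ ∪ W.image (fun w => s(v, w)))) := by
  set S := W.image fun w => s(v, w)
  have hvW : v ∉ W := fun hv => G.loopless.irrefl v (hW v hv)
  have hdS : ∀ f ∈ S, ∀ e ∈ σ, ¬ Dist0 e f ∧ ¬ Dist1 G e f := Finset.forall_mem_image.mpr hd
  have hdisj := disjoint_eSupp_of_not_dist0 fun f hf e he => (hdS f hf e he).1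
  have hvσ : v ∉ eSupp σ := fun ⟨e, he, hv⟩ => (mem_edgeSet_delVert.mp (hσ.1 e he)).2 hv
  have hσS_addBack := union_image_mk_subset_edgeSet_addBack hσ.1 hvW
  refine ⟨fun ⟨w, hw, w', hw', _, hww'⟩ => not_isScarf_addBack_of_adj hvW hdisj hw hw' hww',
    fun hind => ?_⟩
  have hG : IsScarf G (σ ∪ S) := by
    refine hσ.union hdisj (fun T => eq_image_mk_of_eSupp_eq hvW) ?_ ?_ ?_
    · exact fun e he => SimpleGraph.edgeSet_subset_edgeSet.mpr (addBack_le hW) (hσS_addBack e he)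
    · exact fun e he hcov => mem_image_mk_of_mem_edgeSet hind hdS he (eSupp_union σ S ▸ hcov)
    · exact fun e he hcov => mem_edgeSet_delVert.mpr ⟨he, fun hv => hvσ (hcov v hv)⟩
  exact ⟨hG.of_le (addBack_le hW) hσS_addBack, hG⟩

theorem stmt6 {V : Type*} [Fintype V] [DecidableEq V] (G : SimpleGraph V) (v : V)
    (W : Finset V) (hW : ∀ w ∈ W, G.Adj v w) (hWne : W.Nonempty)
    (σ : Finset (Sym2 V)) (hσ : IsScarf (delVert G v) σ)
    (hd : ∀ w ∈ W, ∀ e ∈ σ, ¬ Dist0 e s(v, w) ∧ ¬ Dist1 G e s(v, w)) :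
    ((∃ w ∈ W, ∃ w' ∈ W, w ≠ w' ∧ G.Adj w w') →
        ¬ IsScarf (addBack G v W) (σ ∪ W.image (fun w => s(v, w)))) ∧
    ((∀ w ∈ W, ∀ w' ∈ W, w ≠ w' → ¬ G.Adj w w') →
        IsScarf (addBack G v W) (σ ∪ W.image (fun w => s(v, w))) ∧
          IsScarf G (σ ∪ W.image (fun w => s(v, w)))) :=
  stmt6_general G v W hW σ hσ hd
end

section
/- Let G be a finite simple graph. Then G is a gap-free forest if and only if G contains no induced subgraph isomorphic to the 3-cycle C_3, the 4-cycle C_4, the 5-cycle C_5, or the path P_4 with 4 edges (on 5 vertices). -/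
/-- `G` is gap-free: any two edges in the same connected component are joined by an edge
between some pair of their endpoints. -/
def GapFree {V : Type*} (G : SimpleGraph V) : Prop :=
  ∀ x₁ x₂ y₁ y₂ : V, G.Adj x₁ x₂ → G.Adj y₁ y₂ → G.Reachable x₁ y₁ →
    G.Adj x₁ y₁ ∨ G.Adj x₁ y₂ ∨ G.Adj x₂ y₁ ∨ G.Adj x₂ y₂

/-- `G` has an induced subgraph isomorphic to `H`. -/
def HasInducedIso {V : Type*} {n : ℕ} (G : SimpleGraph V) (H : SimpleGraph (Fin n)) : Prop :=
  ∃ f : Fin n → V, Function.Injective f ∧ ∀ i j, G.Adj (f i) (f j) ↔ H.Adj i j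

/-!
Shortest paths are induced paths. If two edges `x₁x₂`, `y₁y₂` of one component have no edge
between them, take a shortest path from the closest pair of their endpoints, say `x₂` to `y₁`;
in a triangle-free graph, attaching `x₁` and `y₂` at its ends gives an induced path with at
least four edges. If `G` has a cycle, some edge `uw` is not a bridge, and a shortest `u`–`w`
path avoiding that edge closes with `uw` to an induced cycle; it is `C₃`, `C₄`, `C₅`, or it is
longer and contains an induced `P₄`. Conversely, an induced cycle is a cycle, and the end edges
of an induced `P₄` violate gap-freeness.
-/

open SimpleGraph

section

variable {V : Type*} {G : SimpleGraph V}

theorem hasInducedIso_iff_isIndContained {n : ℕ} {H : SimpleGraph (Fin n)} :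
    HasInducedIso G H ↔ H ⊴ G :=
  ⟨fun ⟨f, hf, hadj⟩ ↦ ⟨⟨⟨f, hf⟩, hadj _ _⟩⟩,
    fun ⟨e⟩ ↦ ⟨e, e.injective, fun _ _ ↦ e.map_rel_iff⟩⟩

theorem cycleGraph_adj_iff_val {n : ℕ} (hn : n ≠ 0) {i j : Fin (n + 1)} :
    (cycleGraph (n + 1)).Adj i j ↔
      i.val + 1 = j.val ∨ j.val + 1 = i.val ∨ (i.val = 0 ∧ j.val = n) ∨
        (i.val = n ∧ j.val = 0) := by
  rw [cycleGraph_adj']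
  rcases lt_trichotomy i j with h | rfl | h
  · rw [Fin.coe_sub_iff_lt.mpr h, Fin.sub_val_of_le h.le]
    have : i.val < j.val := h
    omega
  · simp only [sub_self, Fin.val_zero]
    omega
  · rw [Fin.coe_sub_iff_lt.mpr h, Fin.sub_val_of_le h.le]
    have : j.val < i.val := h
    omega

theorem pathGraph_isIndContained_cycleGraph {m n : ℕ} (h : m < n) :
    pathGraph m ⊴ cycleGraph n := by
  obtain ⟨k, rfl⟩ : ∃ k, n = k + 1 := ⟨n - 1, by omega⟩
  refine ⟨⟨⟨Fin.castLE h.le, Fin.castLE_injective _⟩, fun {i j} ↦ ?_⟩⟩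
  have hk : k ≠ 0 := by have := i.2; omega
  simp only [Function.Embedding.coeFn_mk, cycleGraph_adj_iff_val hk, pathGraph_adj,
    Fin.val_castLE]
  omega

theorem hasInducedIso_pathGraph_of_adj_iff {f : ℕ → V} {n : ℕ} (hf : Set.InjOn f (Set.Iic n))
    (hadj : ∀ i ≤ n, ∀ j ≤ n, G.Adj (f i) (f j) ↔ i + 1 = j ∨ j + 1 = i) :
    HasInducedIso G (pathGraph (n + 1)) := by
  refine ⟨fun i ↦ f i, fun i j hij ↦ Fin.ext ?_, fun i j ↦ ?_⟩
  · exact hf (Nat.lt_succ_iff.mp i.2) (Nat.lt_succ_iff.mp j.2) hij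
  · rw [pathGraph_adj]
    exact hadj i (by omega) j (by omega)

theorem hasInducedIso_cycleGraph_of_adj_iff {f : ℕ → V} {n : ℕ} (hn : n ≠ 0)
    (hf : Set.InjOn f (Set.Iic n))
    (hadj : ∀ i ≤ n, ∀ j ≤ n, G.Adj (f i) (f j) ↔
      i + 1 = j ∨ j + 1 = i ∨ (i = 0 ∧ j = n) ∨ (i = n ∧ j = 0)) :
    HasInducedIso G (cycleGraph (n + 1)) := by
  refine ⟨fun i ↦ f i, fun i j hij ↦ Fin.ext ?_, fun i j ↦ ?_⟩
  · exact hf (Nat.lt_succ_iff.mp i.2) (Nat.lt_succ_iff.mp j.2) hij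
  · rw [cycleGraph_adj_iff_val hn]
    exact hadj i (by omega) j (by omega)

theorem hasInducedIso_cycleGraph_three {a b c : V} (hab : G.Adj a b) (hbc : G.Adj b c)
    (hca : G.Adj c a) : HasInducedIso G (cycleGraph 3) := by
  refine ⟨![a, b, c], fun i j h ↦ ?_, fun i j ↦ ?_⟩
  · fin_cases i <;> fin_cases j <;>
      simp_all [hab.ne, hbc.ne, hca.ne, hab.ne.symm, hbc.ne.symm, hca.ne.symm]
  · rw [cycleGraph_three_eq_top]
    fin_cases i <;> fin_cases j <;> simp [hab, hbc, hca, hab.symm, hbc.symm, hca.symm]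

namespace SimpleGraph.Walk

variable {u v x : V}

theorem dist_getVert_of_length_eq_dist {p : G.Walk u v} (hp : p.length = G.dist u v)
    {i j : ℕ} (hij : i ≤ j) (hj : j ≤ p.length) :
    G.dist (p.getVert i) (p.getVert j) = j - i := by
  have hsub := length_eq_dist_of_subwalk hp ((isSubwalk_drop _ i).trans (p.isSubwalk_take j))
  simp only [drop_length, take_length, take_getVert] at hsub
  rwa [min_eq_left hj, min_eq_right hij, eq_comm] at hsub

theorem adj_getVert_iff_of_length_eq_dist {p : G.Walk u v} (hp : p.length = G.dist u v)
    {i j : ℕ} (hi : i ≤ p.length) (hj : j ≤ p.length) :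
    G.Adj (p.getVert i) (p.getVert j) ↔ i + 1 = j ∨ j + 1 = i := by
  rcases le_total i j with hij | hji
  · rw [← dist_eq_one_iff_adj, dist_getVert_of_length_eq_dist hp hij hj]
    omega
  · rw [adj_comm, ← dist_eq_one_iff_adj, dist_getVert_of_length_eq_dist hp hji hi]
    omega

def IsInduced (p : G.Walk u v) : Prop :=
  p.IsPath ∧ ∀ i ≤ p.length, ∀ j ≤ p.length,
    G.Adj (p.getVert i) (p.getVert j) → i + 1 = j ∨ j + 1 = i

theorem isInduced_of_length_eq_dist {p : G.Walk u v} (hp : p.length = G.dist u v) :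
    p.IsInduced :=
  ⟨p.isPath_of_length_eq_dist hp,
    fun _ hi _ hj ↦ (adj_getVert_iff_of_length_eq_dist hp hi hj).mp⟩

theorem IsInduced.reverse {p : G.Walk u v} (hp : p.IsInduced) : p.reverse.IsInduced := by
  refine ⟨hp.1.reverse, fun i hi j hj hadj ↦ ?_⟩
  rw [length_reverse] at hi hj
  rw [getVert_reverse, getVert_reverse] at hadj
  have := hp.2 _ (Nat.sub_le _ i) _ (Nat.sub_le _ j) hadj
  omega

theorem isInduced_cons_iff {p : G.Walk u v} (h : G.Adj x u) :
    (p.cons h).IsInduced ↔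
      p.IsInduced ∧ x ∉ p.support ∧
        ∀ i ≤ p.length, 0 < i → ¬ G.Adj x (p.getVert i) := by
  simp only [IsInduced, cons_isPath_iff, length_cons]
  constructor
  · rintro ⟨⟨hp, hx⟩, hadj⟩
    refine ⟨⟨hp, fun i hi j hj h ↦ ?_⟩, hx, fun i hi hi0 h ↦ ?_⟩
    · have := hadj (i + 1) (by omega) (j + 1) (by omega)
        (by rwa [getVert_cons_succ, getVert_cons_succ])
      omega
    · have := hadj 0 (by omega) (i + 1) (by omega) (by rwa [getVert_zero, getVert_cons_succ])
      omega
  · rintro ⟨⟨hp, hadj⟩, hx, hxp⟩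
    refine ⟨⟨hp, hx⟩, fun i hi j hj h ↦ ?_⟩
    match i, j with
    | 0, 0 => exact absurd h (G.loopless.irrefl _)
    | 0, j + 1 =>
      rw [getVert_zero, getVert_cons_succ] at h
      by_contra
      exact hxp j (by omega) (by omega) h
    | i + 1, 0 =>
      rw [getVert_zero, getVert_cons_succ] at h
      by_contra
      exact hxp i (by omega) (by omega) h.symm
    | i + 1, j + 1 =>
      rw [getVert_cons_succ, getVert_cons_succ] at h
      have := hadj i (by omega) j (by omega) h
      omega

theorem IsInduced.hasInducedIso_pathGraph {p : G.Walk u v} (hp : p.IsInduced) {n : ℕ}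
    (hn : n ≤ p.length) : HasInducedIso G (pathGraph (n + 1)) := by
  refine hasInducedIso_pathGraph_of_adj_iff
    (fun i hi j hj ↦ hp.1.getVert_injOn (le_trans hi hn) (le_trans hj hn)) fun i hi j hj ↦
      ⟨hp.2 i (hi.trans hn) j (hj.trans hn), ?_⟩
  rintro (rfl | rfl)
  · exact p.adj_getVert_succ (by omega)
  · exact (p.adj_getVert_succ (by omega)).symm

/-- If `x` lay on `p` or had a chord to `p.getVert i` with `i ≥ 2`, there would be a path from `x`
to `v` shorter than `p`; a chord to `p.getVert 1` closes a triangle. -/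
theorem isInduced_cons_of_length_eq_dist {p : G.Walk u v} (hp : p.length = G.dist u v)
    (h3 : ¬ HasInducedIso G (cycleGraph 3)) (h : G.Adj x u) (hmin : G.dist u v ≤ G.dist x v) :
    (p.cons h).IsInduced := by
  refine (isInduced_cons_iff h).mpr
    ⟨isInduced_of_length_eq_dist hp, fun hx ↦ ?_, fun i hi hi0 hadj ↦ ?_⟩
  · obtain ⟨i, rfl, hi⟩ := mem_support_iff_exists_getVert.mp hx
    rcases Nat.eq_zero_or_pos i with rfl | hi0
    · exact h.ne (getVert_zero p)
    · have := dist_le (p.drop i)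
      rw [drop_length] at this
      omega
  · rcases Nat.lt_or_ge i 2 with hi1 | hi2
    · obtain rfl : i = 1 := by omega
      have hu : G.Adj u (p.getVert 1) := by simpa using p.adj_getVert_succ (i := 0) (by omega)
      exact h3 (hasInducedIso_cycleGraph_three h hu hadj.symm)
    · have := dist_le ((p.drop i).cons hadj)
      rw [length_cons, drop_length] at this
      omega

end SimpleGraph.Walk

theorem SimpleGraph.IsAcyclic.not_hasInducedIso_cycleGraph (hG : G.IsAcyclic) {n : ℕ}
    (hn : 3 ≤ n) : ¬ HasInducedIso G (cycleGraph n) := by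
  intro hC
  obtain ⟨e⟩ := hasInducedIso_iff_isIndContained.mp hC
  obtain ⟨m, rfl⟩ : ∃ m, n = m + 3 := ⟨n - 3, by omega⟩
  exact hG.embedding e _ cycleGraph.isCycle_cycle

theorem GapFree.not_hasInducedIso_pathGraph (hG : GapFree G) {n : ℕ} (hn : 5 ≤ n) :
    ¬ HasInducedIso G (pathGraph n) := by
  rintro ⟨f, -, hf⟩
  set g : Fin 5 → V := f ∘ Fin.castLE hn
  have hg : ∀ i j, G.Adj (g i) (g j) ↔ i.val + 1 = j.val ∨ j.val + 1 = i.val := by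
    intro i j
    simp only [g, Function.comp_apply, hf, pathGraph_adj, Fin.val_castLE]
  have hr : G.Reachable (g 0) (g 3) :=
    (((hg 0 1).mpr (by decide)).reachable.trans ((hg 1 2).mpr (by decide)).reachable).trans
      ((hg 2 3).mpr (by decide)).reachable
  rcases hG _ _ _ _ ((hg 0 1).mpr (by decide)) ((hg 3 4).mpr (by decide)) hr with
    h | h | h | h <;> exact absurd ((hg _ _).mp h) (by decide)

open Walk in
theorem hasInducedIso_pathGraph_five_of_gap (h3 : ¬ HasInducedIso G (cycleGraph 3))
    {x₁ x₂ y₁ y₂ : V} (hx : G.Adj x₁ x₂) (hy : G.Adj y₁ y₂)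
    (h11 : ¬ G.Adj x₁ y₁) (h12 : ¬ G.Adj x₁ y₂) (h21 : ¬ G.Adj x₂ y₁)
    (hr : G.Reachable x₂ y₁) (hmin₁ : G.dist x₂ y₁ ≤ G.dist x₁ y₁)
    (hmin₂ : G.dist x₂ y₁ ≤ G.dist x₂ y₂) : HasInducedIso G (pathGraph 5) := by
  obtain ⟨p, hp⟩ := hr.exists_walk_length_eq_dist
  have hd : 2 ≤ p.length := by
    have hne : x₂ ≠ y₁ := fun h ↦ h11 (h ▸ hx)
    have h0 := hr.dist_eq_zero_iff.not.mpr hne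
    have h1 := dist_eq_one_iff_adj.not.mpr h21
    omega
  obtain ⟨-, hx₁, hx₁p⟩ :=
    (isInduced_cons_iff hx).mp (isInduced_cons_of_length_eq_dist hp h3 hx hmin₁)
  have hY := isInduced_cons_of_length_eq_dist (p := p.reverse)
    (by rw [length_reverse, hp, dist_comm]) h3 hy.symm
    (by rwa [dist_comm, dist_comm (u := y₂)])
  have hW : ((p.reverse.cons hy.symm).reverse.cons hx).IsInduced := by
    refine (isInduced_cons_iff hx).mpr ⟨hY.reverse, ?_, fun i hi hi0 ↦ ?_⟩
    · have : x₁ ≠ y₂ := by rintro rfl; exact h11 hy.symm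
      simp only [support_reverse, support_cons, List.mem_reverse, List.mem_cons, not_or]
      exact ⟨this, hx₁⟩
    · simp only [reverse_cons, reverse_reverse, length_append, length_cons, length_nil] at hi ⊢
      rw [getVert_append']
      split_ifs with hip
      · exact hx₁p i hip hi0
      · simpa [show i - p.length = 1 by omega] using h12
  exact hW.hasInducedIso_pathGraph (by simp; omega)

theorem gapFree_of_not_hasInducedIso (h3 : ¬ HasInducedIso G (cycleGraph 3))
    (hP : ¬ HasInducedIso G (pathGraph 5)) : GapFree G := by
  intro x₁ x₂ y₁ y₂ hx hy hr
  by_contra! h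
  obtain ⟨h11, h12, h21, h22⟩ := h
  have hr₂₁ : G.Reachable x₂ y₁ := hx.symm.reachable.trans hr
  have hr₁₂ : G.Reachable x₁ y₂ := hr.trans hy.reachable
  have hr₂₂ : G.Reachable x₂ y₂ := hr₂₁.trans hy.reachable
  apply hP
  rcases (by omega :
      G.dist x₂ y₁ ≤ G.dist x₁ y₁ ∧ G.dist x₂ y₁ ≤ G.dist x₂ y₂ ∨
      G.dist x₁ y₁ ≤ G.dist x₂ y₁ ∧ G.dist x₁ y₁ ≤ G.dist x₁ y₂ ∨
      G.dist x₂ y₂ ≤ G.dist x₁ y₂ ∧ G.dist x₂ y₂ ≤ G.dist x₂ y₁ ∨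
      G.dist x₁ y₂ ≤ G.dist x₂ y₂ ∧ G.dist x₁ y₂ ≤ G.dist x₁ y₁) with
    ⟨h₁, h₂⟩ | ⟨h₁, h₂⟩ | ⟨h₁, h₂⟩ | ⟨h₁, h₂⟩
  · exact hasInducedIso_pathGraph_five_of_gap h3 hx hy h11 h12 h21 hr₂₁ h₁ h₂
  · exact hasInducedIso_pathGraph_five_of_gap h3 hx.symm hy h21 h22 h11 hr h₁ h₂
  · exact hasInducedIso_pathGraph_five_of_gap h3 hx hy.symm h12 h11 h22 hr₂₂ h₁ h₂
  · exact hasInducedIso_pathGraph_five_of_gap h3 hx.symm hy.symm h22 h21 h12 hr₁₂ h₁ h₂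

theorem exists_hasInducedIso_cycleGraph_of_not_isAcyclic (h : ¬ G.IsAcyclic) :
    ∃ n, 3 ≤ n ∧ HasInducedIso G (cycleGraph n) := by
  simp only [isAcyclic_iff_forall_adj_isBridge, isBridge_iff, not_forall, not_not] at h
  obtain ⟨u, w, huw, hr⟩ := h
  obtain ⟨p, hp⟩ := hr.exists_walk_length_eq_dist
  have hinj := (p.isPath_of_length_eq_dist hp).getVert_injOn
  have hd : 2 ≤ p.length := by
    have h0 := hr.dist_eq_zero_iff.not.mpr huw.ne
    have hnadj : ¬ (G.deleteEdges {s(u, w)}).Adj u w := by simp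
    have h1 := dist_eq_one_iff_adj.not.mpr hnadj
    omega
  refine ⟨p.length + 1, by omega,
    hasInducedIso_cycleGraph_of_adj_iff (f := p.getVert) (by omega) hinj fun i hi j hj ↦ ?_⟩
  have hadj : ∀ a b, G.Adj a b ↔ (G.deleteEdges {s(u, w)}).Adj a b ∨ s(a, b) = s(u, w) := by
    intro a b
    rw [deleteEdges_adj, Set.mem_singleton_iff]
    by_cases he : s(a, b) = s(u, w)
    · have : G.Adj a b := by rw [← mem_edgeSet, he]; exact huw
      simp [he, this]
    · simp [he]
  have hend : s(p.getVert i, p.getVert j) = s(u, w) ↔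
      (i = 0 ∧ j = p.length) ∨ (i = p.length ∧ j = 0) := by
    have hu : ∀ k ≤ p.length, p.getVert k = u ↔ k = 0 := fun k hk ↦ by
      rw [← hinj.eq_iff hk (Nat.zero_le _), p.getVert_zero]
    have hw : ∀ k ≤ p.length, p.getVert k = w ↔ k = p.length := fun k hk ↦ by
      rw [← hinj.eq_iff hk (le_refl p.length), p.getVert_length]
    rw [Sym2.eq_iff, hu i hi, hu j hj, hw i hi, hw j hj]
  rw [hadj, Walk.adj_getVert_iff_of_length_eq_dist hp hi hj, hend]
  tauto

theorem isAcyclic_of_not_hasInducedIso (h3 : ¬ HasInducedIso G (cycleGraph 3))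
    (h4 : ¬ HasInducedIso G (cycleGraph 4)) (h5 : ¬ HasInducedIso G (cycleGraph 5))
    (hP : ¬ HasInducedIso G (pathGraph 5)) : G.IsAcyclic := by
  by_contra hG
  obtain ⟨n, hn, hC⟩ := exists_hasInducedIso_cycleGraph_of_not_isAcyclic hG
  rcases (by omega : n = 3 ∨ n = 4 ∨ n = 5 ∨ 6 ≤ n) with rfl | rfl | rfl | hn
  · exact h3 hC
  · exact h4 hC
  · exact h5 hC
  · exact hP (hasInducedIso_iff_isIndContained.mpr
      ((pathGraph_isIndContained_cycleGraph hn).trans (hasInducedIso_iff_isIndContained.mp hC)))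

end

theorem stmt13_general {V : Type*} (G : SimpleGraph V) :
    (G.IsAcyclic ∧ GapFree G) ↔
      (¬ HasInducedIso G (SimpleGraph.cycleGraph 3) ∧
        ¬ HasInducedIso G (SimpleGraph.cycleGraph 4) ∧
        ¬ HasInducedIso G (SimpleGraph.cycleGraph 5) ∧
        ¬ HasInducedIso G (SimpleGraph.pathGraph 5)) := by
  constructor
  · rintro ⟨hA, hG⟩
    exact ⟨hA.not_hasInducedIso_cycleGraph le_rfl, hA.not_hasInducedIso_cycleGraph (by norm_num),
      hA.not_hasInducedIso_cycleGraph (by norm_num), hG.not_hasInducedIso_pathGraph le_rfl⟩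
  · rintro ⟨h3, h4, h5, hP⟩
    exact ⟨isAcyclic_of_not_hasInducedIso h3 h4 h5 hP, gapFree_of_not_hasInducedIso h3 hP⟩

theorem stmt13 {V : Type*} [Fintype V] (G : SimpleGraph V) :
    (G.IsAcyclic ∧ GapFree G) ↔
      (¬ HasInducedIso G (SimpleGraph.cycleGraph 3) ∧
        ¬ HasInducedIso G (SimpleGraph.cycleGraph 4) ∧
        ¬ HasInducedIso G (SimpleGraph.cycleGraph 5) ∧
        ¬ HasInducedIso G (SimpleGraph.pathGraph 5)) :=
  stmt13_general G
end

section
/- Let G be a finite simple graph with edge ideal I = I(G) and let t ≥ 1. Suppose a, b, c are vertices forming a triangle in G (all of ab, bc, ca are edges), and let e and e' be two distinct edges of this triangle. Let m̄ be a minimal generator of I^{t-1} (the zero exponent vector when t = 1), and suppose m = e·m̄ and m' = e'·m̄ (products taken as sums of exponent vectors) are both minimal generators of I^t. Then the two-element set {m, m'} is not a Scarf face of I^t. -/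
lemma exists_minGen_le {V : Type*} [Fintype V] [DecidableEq V] (G : SimpleGraph V)
    (t : ℕ) : ∀ m : V → ℕ, IsEdgeSum G t m → ∃ n, IsMinGen G t n ∧ n ≤ m := by
  suffices H : ∀ k : ℕ, ∀ m : V → ℕ, (∑ v, m v) = k → IsEdgeSum G t m →
      ∃ n, IsMinGen G t n ∧ n ≤ m by
    intro m hm; exact H _ m rfl hm
  intro k
  induction k using Nat.strong_induction_on with
  | _ k ih =>
    intro m hk hsum
    by_cases h : ∀ m', IsEdgeSum G t m' → m' ≤ m → m' = m
    · exact ⟨m, ⟨hsum, h⟩, le_refl m⟩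
    · push_neg at h
      obtain ⟨m', hm'1, hm'2, hm'3⟩ := h
      have hlt : (∑ v, m' v) < k := by
        rw [← hk]
        apply Finset.sum_lt_sum (fun i _ => hm'2 i)
        obtain ⟨v, hv⟩ := Function.ne_iff.mp hm'3
        exact ⟨v, Finset.mem_univ v, lt_of_le_of_ne (hm'2 v) hv⟩
      obtain ⟨n, hn, hnle⟩ := ih _ hlt m' rfl hm'1
      exact ⟨n, hn, hnle.trans hm'2⟩

lemma helper14 {V : Type*} [Fintype V] [DecidableEq V] (G : SimpleGraph V)
    (t : ℕ) (ht : 1 ≤ t)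
    (p q r : V) (hpq : G.Adj p q) (hqr : G.Adj q r) (hrp : G.Adj r p)
    (mbar : V → ℕ) (hmbar : IsMinGen G (t - 1) mbar)
    (m m' : V → ℕ) (hm : m = edgeMon s(p, q) + mbar) (hm' : m' = edgeMon s(q, r) + mbar)
    (hmg : IsMinGen G t m) (hmg' : IsMinGen G t m') :
    ¬ IsScarfPow G t {m, m'} := by
  have hpq' : p ≠ q := hpq.ne
  have hqr' : q ≠ r := hqr.ne
  have hrp' : r ≠ p := hrp.ne
  -- pointwise values of edge monomials
  have hq1 : edgeMon s(p, q) q = 1 := by simp [edgeMon]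
  have hq2 : edgeMon s(q, r) q = 1 := by simp [edgeMon]
  have hq3 : edgeMon s(r, p) q = 0 := by
    simp [edgeMon, Sym2.mem_iff, hqr', hpq'.symm]
  have hp1 : edgeMon s(p, q) p = 1 := by simp [edgeMon]
  have hp2 : edgeMon s(q, r) p = 0 := by
    simp [edgeMon, Sym2.mem_iff, hpq', hrp'.symm]
  have hle : ∀ x, edgeMon s(r, p) x ≤ max (edgeMon s(p, q) x) (edgeMon s(q, r) x) := by
    intro x
    by_cases hxp : x = p <;> by_cases hxq : x = q <;> by_cases hxr : x = r <;>
      simp [edgeMon, Sym2.mem_iff, hxp, hxq, hxr, hpq', hqr', hrp', hpq'.symm, hqr'.symm, hrp'.symm] <;> omega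
  intro hscarf
  obtain ⟨hmem, huniq⟩ := hscarf
  -- the third generator
  have hsum'' : IsEdgeSum G t (edgeMon s(r, p) + mbar) := by
    obtain ⟨s, hs1, hs2, hs3⟩ := hmbar.1
    refine ⟨s(r, p) ::ₘ s, ?_, ?_, ?_⟩
    · intro f hf
      rcases Multiset.mem_cons.mp hf with h | h
      · rw [h]; exact hrp
      · exact hs1 f h
    · simp only [Multiset.card_cons, hs2]; omega
    · simp [Multiset.map_cons, Multiset.sum_cons, hs3]
  obtain ⟨n, hnmin, hnle⟩ := exists_minGen_le G t _ hsum''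
  have hnm : n ≠ m := by
    intro h
    have h2 := hnle q
    rw [h, hm] at h2
    simp only [Pi.add_apply, hq1, hq3] at h2
    omega
  have hnm' : n ≠ m' := by
    intro h
    have h2 := hnle q
    rw [h, hm'] at h2
    simp only [Pi.add_apply, hq2, hq3] at h2
    omega
  have hmm' : m ≠ m' := by
    intro h
    have h2 := congrFun h p
    rw [hm, hm'] at h2
    simp only [Pi.add_apply, hp1, hp2] at h2
    omega
  -- the bigger set τ
  have hnsup : n ≤ m ⊔ m' := by
    intro x
    have h1 := hnle x
    have h2 := hle x
    simp only [Pi.add_apply] at h1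
    show n x ≤ max (m x) (m' x)
    rw [hm, hm']
    simp only [Pi.add_apply]
    omega
  have hτ := huniq (insert n {m, m'}) ?_ ?_
  · have : n ∈ ({m, m'} : Finset (V → ℕ)) := hτ ▸ Finset.mem_insert_self n {m, m'}
    rcases Finset.mem_insert.mp this with h | h
    · exact hnm h
    · exact hnm' (Finset.mem_singleton.mp h)
  · intro x hx
    rcases Finset.mem_insert.mp hx with h | h
    · exact h ▸ hnmin
    · exact hmem x h
  · show (insert n {m, m'} : Finset (V → ℕ)).sup id = ({m, m'} : Finset (V → ℕ)).sup id
    rw [Finset.sup_insert]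
    have h2 : ({m, m'} : Finset (V → ℕ)).sup id = m ⊔ m' := by
      rw [Finset.sup_insert, Finset.sup_singleton]; rfl
    rw [h2]
    exact sup_eq_right.mpr (h2 ▸ hnsup)

theorem stmt14 {V : Type*} [Fintype V] [DecidableEq V] (G : SimpleGraph V)
    (t : ℕ) (ht : 1 ≤ t)
    (a b c : V) (hab : G.Adj a b) (hbc : G.Adj b c) (hca : G.Adj c a)
    (e e' : Sym2 V)
    (he : e ∈ ({s(a, b), s(b, c), s(c, a)} : Set (Sym2 V)))
    (he' : e' ∈ ({s(a, b), s(b, c), s(c, a)} : Set (Sym2 V)))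
    (hee : e ≠ e')
    (mbar : V → ℕ) (hmbar : IsMinGen G (t - 1) mbar)
    (m m' : V → ℕ) (hm : m = edgeMon e + mbar) (hm' : m' = edgeMon e' + mbar)
    (hmg : IsMinGen G t m) (hmg' : IsMinGen G t m') :
    ¬ IsScarfPow G t {m, m'} := by
  simp only [Set.mem_insert_iff, Set.mem_singleton_iff] at he he'
  rcases he with rfl | rfl | rfl <;> rcases he' with rfl | rfl | rfl
  · exact absurd rfl hee
  · exact helper14 G t ht a b c hab hbc hca mbar hmbar m m' hm hm' hmg hmg'
  · rw [Sym2.eq_swap] at hm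
    rw [Sym2.eq_swap] at hm'
    exact helper14 G t ht b a c hab.symm hca.symm hbc.symm mbar hmbar m m' hm hm' hmg hmg'
  · rw [Sym2.eq_swap] at hm
    rw [Sym2.eq_swap] at hm'
    exact helper14 G t ht c b a hbc.symm hab.symm hca.symm mbar hmbar m m' hm hm' hmg hmg'
  · exact absurd rfl hee
  · exact helper14 G t ht b c a hbc hca hab mbar hmbar m m' hm hm' hmg hmg'
  · exact helper14 G t ht c a b hca hab hbc mbar hmbar m m' hm hm' hmg hmg'
  · rw [Sym2.eq_swap] at hm
    rw [Sym2.eq_swap] at hm'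
    exact helper14 G t ht a c b hca.symm hbc.symm hab.symm mbar hmbar m m' hm hm' hmg hmg'
  · exact absurd rfl hee
end

section
/- Let G be the triangle on vertices a, b, c, with edge ideal I = (ab, bc, ca), and let t ≥ 1. Then the minimal generating set of I^t is exactly { a^α b^β c^γ : α + β + γ = 2t and 0 ≤ α, β, γ ≤ t }, this set has binom(t+2, 2) elements, and no Scarf face of I^t contains two distinct minimal generators; thus the Scarf complex of I^t consists precisely of the empty set and the singletons (a set of binom(t+2,2) isolated vertices). -/
/-- The triangle on vertices `a = 0`, `b = 1`, `c = 2`. -/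
def triangleG : SimpleGraph (Fin 3) := ⊤

/-! A product of `t` edges of any graph has degree `2t`, so all such products are minimal
generators of `I(G)^t`. For the triangle they are exactly the exponent vectors of degree `2t`
with entries at most `t`, and `m ↦ t - m` turns them into the compositions of `t` into three
parts. If a Scarf face contained two generators, its lcm `L` would have degree `2t + d` with
`d ≥ 1`. Lowering one coordinate of `L` by `d` gives three generators below `L`, which must all
lie in the face; but any two of them already have lcm `L`, so dropping the third from the face
does not change its lcm. -/

open Finset

lemma eq_of_le_of_sum_le {V : Type*} [Fintype V] {f g : V → ℕ} (hfg : f ≤ g)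
    (hsum : ∑ x, g x ≤ ∑ x, f x) : f = g :=
  funext fun x => (sum_eq_sum_iff_of_le fun x _ => hfg x).1
    (le_antisymm (sum_le_sum fun x _ => hfg x) hsum) x (mem_univ x)

lemma le_mLcm {V : Type*} {m : V → ℕ} {σ : Finset (V → ℕ)} (hm : m ∈ σ) : m ≤ mLcm σ :=
  le_sup (f := id) hm

section EdgeIdealPowers

variable {V : Type*} [DecidableEq V] {G : SimpleGraph V} {t : ℕ} {m m' : V → ℕ}

lemma edgeMon_le_one (e : Sym2 V) (x : V) : edgeMon e x ≤ 1 := by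
  unfold edgeMon
  split_ifs <;> simp

lemma sum_edgeMon [Fintype V] {e : Sym2 V} (he : ¬ e.IsDiag) : ∑ x, edgeMon e x = 2 := by
  induction e using Sym2.ind with
  | _ a b =>
    have hab : a ≠ b := by simpa using he
    simp [edgeMon, Sym2.mem_iff, filter_or, filter_eq', card_pair hab]

lemma IsEdgeSum.apply_le (h : IsEdgeSum G t m) (x : V) : m x ≤ t := by
  obtain ⟨s, -, rfl, rfl⟩ := h
  rw [Pi.multiset_sum_apply, Multiset.map_map]
  simpa using Multiset.sum_le_card_nsmul (s.map fun e => edgeMon e x) 1 (by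
    intro y hy
    obtain ⟨e, -, rfl⟩ := Multiset.mem_map.1 hy
    exact edgeMon_le_one e x)

lemma IsEdgeSum.sum_eq [Fintype V] (h : IsEdgeSum G t m) : ∑ x, m x = 2 * t := by
  obtain ⟨s, hs, rfl, rfl⟩ := h
  simp_rw [Pi.multiset_sum_apply, Multiset.map_map, Function.comp_def, ← Multiset.sum_map_sum]
  rw [Multiset.map_congr rfl fun e he => sum_edgeMon (G.not_isDiag_of_mem_edgeSet (hs e he)),
    Multiset.map_const', Multiset.sum_replicate, smul_eq_mul, mul_comm]

lemma isMinGen_iff_isEdgeSum [Fintype V] : IsMinGen G t m ↔ IsEdgeSum G t m :=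
  ⟨And.left, fun h => ⟨h, fun _ hm' hle => eq_of_le_of_sum_le hle (by rw [h.sum_eq, hm'.sum_eq])⟩⟩

lemma IsMinGen.eq_of_le (h : IsMinGen G t m) (h' : IsMinGen G t m') (hle : m ≤ m') : m = m' :=
  h'.2 m h.1 hle

lemma IsMinGen.ne_zero [Fintype V] (h : IsMinGen G t m) (ht : 1 ≤ t) : m ≠ 0 := by
  rintro rfl
  have := h.1.sum_eq
  simp only [Pi.zero_apply, sum_const_zero] at this
  omega

lemma IsScarfPow.mem_of_le_mLcm {σ : Finset (V → ℕ)} (hσ : IsScarfPow G t σ)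
    (hm : IsMinGen G t m) (hle : m ≤ mLcm σ) : m ∈ σ := by
  classical
  have : insert m σ = σ :=
    hσ.2 _ (forall_mem_insert _ _ _ |>.2 ⟨hm, hσ.1⟩) (by simpa [mLcm, sup_insert] using hle)
  exact this ▸ mem_insert_self m σ

lemma IsScarfPow.not_le_mLcm_erase [DecidableEq (V → ℕ)] {σ : Finset (V → ℕ)}
    (hσ : IsScarfPow G t σ) (hm : m ∈ σ) : ¬ m ≤ mLcm (σ.erase m) := by
  intro hle
  have : σ.erase m = σ := hσ.2 _ (fun f hf => hσ.1 f (mem_of_mem_erase hf)) <| by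
    conv_rhs => rw [← insert_erase hm, mLcm, sup_insert]
    simpa [mLcm] using hle
  exact notMem_erase m σ (this.symm ▸ hm)

lemma isScarfPow_empty [Fintype V] (ht : 1 ≤ t) : IsScarfPow G t ∅ := by
  refine ⟨by simp, fun τ hτ hlcm => eq_empty_of_forall_notMem fun f hf => ?_⟩
  have hle : f ≤ mLcm ∅ := hlcm ▸ le_mLcm hf
  exact (hτ f hf).ne_zero ht (le_bot_iff.1 hle)

lemma isScarfPow_singleton [Fintype V] (ht : 1 ≤ t) (hm : IsMinGen G t m) :
    IsScarfPow G t {m} := by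
  have hlcm_m : mLcm {m} = m := sup_singleton
  refine ⟨by simpa using hm, fun τ hτ hlcm => ?_⟩
  rw [hlcm_m] at hlcm
  have hsub : τ ⊆ {m} := fun f hf =>
    mem_singleton.2 ((hτ f hf).eq_of_le hm (hlcm ▸ le_mLcm hf))
  rcases subset_singleton_iff.1 hsub with rfl | h
  · exact absurd hlcm.symm (hm.ne_zero ht)
  · exact h

end EdgeIdealPowers

section Triangle

variable {t : ℕ} {m : Fin 3 → ℕ}

lemma isEdgeSum_triangleG_iff :
    IsEdgeSum triangleG t m ↔ m 0 + m 1 + m 2 = 2 * t ∧ m 0 ≤ t ∧ m 1 ≤ t ∧ m 2 ≤ t := by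
  refine ⟨fun h => ⟨by simpa [Fin.sum_univ_three] using h.sum_eq,
    h.apply_le 0, h.apply_le 1, h.apply_le 2⟩, ?_⟩
  rintro ⟨hsum, h0, h1, h2⟩
  -- `t - m i` copies of the edge avoiding vertex `i`
  refine ⟨.replicate (t - m 2) s(0, 1) + .replicate (t - m 0) s(1, 2) +
    .replicate (t - m 1) s(0, 2), ?_, ?_, ?_⟩
  · intro e he
    simp only [Multiset.mem_add, Multiset.mem_replicate] at he
    rcases he with (⟨_, rfl⟩ | ⟨_, rfl⟩) | ⟨_, rfl⟩ <;> simp [triangleG]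
  · simp only [Multiset.card_add, Multiset.card_replicate]
    omega
  · funext i
    simp only [Multiset.map_add, Multiset.map_replicate, Multiset.sum_add, Multiset.sum_replicate]
    fin_cases i <;> simp [edgeMon, Sym2.mem_iff] <;> omega

lemma isMinGen_triangleG_iff :
    IsMinGen triangleG t m ↔ m 0 + m 1 + m 2 = 2 * t ∧ m 0 ≤ t ∧ m 1 ≤ t ∧ m 2 ≤ t :=
  isMinGen_iff_isEdgeSum.trans isEdgeSum_triangleG_iff

lemma ncard_triangle_exponents (t : ℕ) :
    {m : Fin 3 → ℕ | m 0 + m 1 + m 2 = 2 * t ∧ m 0 ≤ t ∧ m 1 ≤ t ∧ m 2 ≤ t}.ncard =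
      (t + 2).choose 2 := by
  let e : {m : Fin 3 → ℕ | m 0 + m 1 + m 2 = 2 * t ∧ m 0 ≤ t ∧ m 1 ≤ t ∧ m 2 ≤ t} ≃
      {P : Fin 3 → ℕ // ∑ i, P i = t} :=
    { toFun := fun m => ⟨fun i => t - m.1 i, by
        obtain ⟨hs, h0, h1, h2⟩ := m.2
        simp only [Fin.sum_univ_three]
        omega⟩
      invFun := fun P => ⟨fun i => t - P.1 i, by
        have hP := P.2
        simp only [Fin.sum_univ_three] at hP
        refine ⟨?_, ?_, ?_, ?_⟩ <;> dsimp only <;> omega⟩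
      left_inv := fun m => by
        obtain ⟨-, h0, h1, h2⟩ := m.2
        ext i
        fin_cases i <;> simp <;> omega
      right_inv := fun P => by
        have hP := P.2
        simp only [Fin.sum_univ_three] at hP
        ext i
        fin_cases i <;> simp <;> omega }
  rw [← Nat.card_coe_set_eq, Nat.card_congr (e.trans (Sym.equivNatSumOfFintype (Fin 3) t).symm),
    Nat.card_eq_fintype_card, Sym.card_sym_eq_choose, Fintype.card_fin,
    show 3 + t - 1 = t + 2 by omega, Nat.choose_symm_add]

lemma IsScarfPow.card_le_one_triangleG {σ : Finset (Fin 3 → ℕ)}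
    (hσ : IsScarfPow triangleG t σ) : #σ ≤ 1 := by
  refine card_le_one.2 fun m hm m' hm' => by_contra fun hne => ?_
  set L := mLcm σ
  have hL : L ≤ fun _ => t := Finset.sup_le fun f hf i => (hσ.1 f hf).1.apply_le i
  have hL0 : L 0 ≤ t := hL 0
  have hL1 : L 1 ≤ t := hL 1
  have hL2 : L 2 ≤ t := hL 2
  have hd : 2 * t < L 0 + L 1 + L 2 := by
    by_contra! h
    have hL_eq : ∀ f ∈ σ, f = L := fun f hf => eq_of_le_of_sum_le (le_mLcm hf) <| by
      rw [(hσ.1 f hf).1.sum_eq, Fin.sum_univ_three]; exact h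
    exact hne ((hL_eq m hm).trans (hL_eq m' hm').symm)
  set d := L 0 + L 1 + L 2 - 2 * t with hd_def
  let lower : Fin 3 → Fin 3 → ℕ := fun k => Function.update L k (L k - d)
  have hlower_le : ∀ k, lower k ≤ L := fun k i => by
    by_cases hik : i = k
    · subst hik; simp [lower]
    · simp [lower, hik]
  have hlower_gen : ∀ k, IsMinGen triangleG t (lower k) := by
    intro k
    rw [isMinGen_triangleG_iff]
    fin_cases k <;> simp [lower] <;> omega
  have hlower_mem : ∀ k, lower k ∈ σ := fun k => hσ.mem_of_le_mLcm (hlower_gen k) (hlower_le k)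
  have hlower_ne : ∀ k, k ≠ 0 → lower k ≠ lower 0 := fun k hk h => by
    have := congrFun h 0
    simp [lower, Ne.symm hk] at this
    omega
  apply hσ.not_le_mLcm_erase (hlower_mem 0)
  calc lower 0 ≤ lower 1 ⊔ lower 2 := fun i => by fin_cases i <;> simp [lower]
    _ ≤ mLcm (σ.erase (lower 0)) := sup_le
        (le_mLcm (mem_erase.2 ⟨hlower_ne 1 (by decide), hlower_mem 1⟩))
        (le_mLcm (mem_erase.2 ⟨hlower_ne 2 (by decide), hlower_mem 2⟩))

end Triangle

theorem stmt16 (t : ℕ) (ht : 1 ≤ t) :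
    (∀ m : Fin 3 → ℕ, IsMinGen triangleG t m ↔
        (m 0 + m 1 + m 2 = 2 * t ∧ m 0 ≤ t ∧ m 1 ≤ t ∧ m 2 ≤ t)) ∧
    {m : Fin 3 → ℕ | IsMinGen triangleG t m}.ncard = Nat.choose (t + 2) 2 ∧
    (∀ σ : Finset (Fin 3 → ℕ), IsScarfPow triangleG t σ ↔
        (σ = ∅ ∨ ∃ m, IsMinGen triangleG t m ∧ σ = {m})) := by
  refine ⟨fun m => isMinGen_triangleG_iff, ?_, fun σ => ⟨fun hσ => ?_, ?_⟩⟩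
  · simp_rw [isMinGen_triangleG_iff]
    exact ncard_triangle_exponents t
  · obtain ⟨m, hsub⟩ := card_le_one_iff_subset_singleton.1 hσ.card_le_one_triangleG
    rcases subset_singleton_iff.1 hsub with h | h
    · exact .inl h
    · exact .inr ⟨m, hσ.1 m (h ▸ mem_singleton_self m), h⟩
  · rintro (rfl | ⟨m, hm, rfl⟩)
    · exact isScarfPow_empty ht
    · exact isScarfPow_singleton ht hm
end

section
/- Let G be the path of length 3 on vertices a, b, c, d, with edge ideal I = (ab, bc, cd), and let t ≥ 2. Then the minimal generating set of I^t is exactly { m(i,k) := a^i b^{t-k} c^{t-i} d^k : 0 ≤ i, k and i + k ≤ t }. A two-element set {m(i,k), m(α,β)} of distinct minimal generators is a Scarf face of I^t if and only if (|i - α| = 1 and k = β) or (i = α and |k - β| = 1); moreover no Scarf face of I^t has more than two elements. Thus Scarf(I^t) is the 1-dimensional grid complex described (the upper-triangular portion of a t × t grid). -/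
/-- The path of length 3 on vertices `a = 0`, `b = 1`, `c = 2`, `d = 3`. -/
def pathG : SimpleGraph (Fin 4) :=
  SimpleGraph.fromEdgeSet {s(0, 1), s(1, 2), s(2, 3)}


section ScarfAux

/-- The generator `a^i b^(t-k) c^(t-i) d^k` as an exponent vector. -/
def gen (t i k : ℕ) : Fin 4 → ℕ := ![i, t - k, t - i, k]

lemma gen_inj {t i k α β : ℕ} (h : gen t i k = gen t α β) : i = α ∧ k = β :=
  ⟨congrFun h 0, congrFun h 3⟩

lemma gen_le {t i k α β : ℕ} (h : gen t i k ≤ gen t α β) (hαβ : α + β ≤ t) :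
    i = α ∧ k = β := by
  have h0 : i ≤ α := h 0
  have h1 : t - k ≤ t - β := h 1
  have h2 : t - i ≤ t - α := h 2
  have h3 : k ≤ β := h 3
  constructor <;> omega

lemma mem_pathG (e : Sym2 (Fin 4)) :
    e ∈ pathG.edgeSet ↔ e = s(0,1) ∨ e = s(1,2) ∨ e = s(2,3) := by
  simp [pathG, SimpleGraph.edgeSet_fromEdgeSet, Set.mem_diff]
  intro h
  rcases h with h|h|h <;> subst h <;> simp [Sym2.isDiag_iff_proj_eq]

lemma edgeMon01 : edgeMon (s(0,1) : Sym2 (Fin 4)) = ![1,1,0,0] := by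
  funext x; fin_cases x <;> simp [edgeMon, Sym2.mem_iff]
lemma edgeMon12 : edgeMon (s(1,2) : Sym2 (Fin 4)) = ![0,1,1,0] := by
  funext x; fin_cases x <;> simp [edgeMon, Sym2.mem_iff]
lemma edgeMon23 : edgeMon (s(2,3) : Sym2 (Fin 4)) = ![0,0,1,1] := by
  funext x; fin_cases x <;> simp [edgeMon, Sym2.mem_iff]

lemma sum_form (s : Multiset (Sym2 (Fin 4))) (hs : ∀ e ∈ s, e ∈ pathG.edgeSet) :
    ∃ i k, i + k ≤ Multiset.card s ∧ (s.map edgeMon).sum = gen (Multiset.card s) i k := by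
  induction s using Multiset.induction_on with
  | empty =>
      refine ⟨0, 0, by simp, ?_⟩
      funext v; fin_cases v <;> simp [gen]
  | cons e s ih =>
      obtain ⟨i, k, hik, hsum⟩ := ih (fun f hf => hs f (Multiset.mem_cons_of_mem hf))
      have he := (mem_pathG e).1 (hs e (Multiset.mem_cons_self e s))
      have hcard : Multiset.card (e ::ₘ s) = Multiset.card s + 1 := by simp
      set n := Multiset.card s with hn
      rcases he with h|h|h <;> subst h
      · refine ⟨i + 1, k, by omega, ?_⟩
        rw [Multiset.map_cons, Multiset.sum_cons, hsum, edgeMon01, hcard]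
        funext v; fin_cases v <;> simp [gen, Pi.add_apply] <;> omega
      · refine ⟨i, k, by omega, ?_⟩
        rw [Multiset.map_cons, Multiset.sum_cons, hsum, edgeMon12, hcard]
        funext v; fin_cases v <;> simp [gen, Pi.add_apply] <;> omega
      · refine ⟨i, k + 1, by omega, ?_⟩
        rw [Multiset.map_cons, Multiset.sum_cons, hsum, edgeMon23, hcard]
        funext v; fin_cases v <;> simp [gen, Pi.add_apply] <;> omega

lemma isEdgeSum_iff (t : ℕ) (m : Fin 4 → ℕ) :
    IsEdgeSum pathG t m ↔ ∃ i k, i + k ≤ t ∧ m = gen t i k := by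
  constructor
  · rintro ⟨s, hs, hcard, hsum⟩
    obtain ⟨i, k, hik, h⟩ := sum_form s hs
    exact ⟨i, k, hcard ▸ hik, by rw [← hsum, h, hcard]⟩
  · rintro ⟨i, k, hik, rfl⟩
    refine ⟨Multiset.replicate i s(0,1) + Multiset.replicate (t - i - k) s(1,2) +
      Multiset.replicate k s(2,3), ?_, ?_, ?_⟩
    · intro e he
      rw [mem_pathG]
      simp only [Multiset.mem_add, Multiset.mem_replicate] at he
      tauto
    · simp; omega
    · rw [Multiset.map_add, Multiset.map_add, Multiset.map_replicate, Multiset.map_replicate,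
        Multiset.map_replicate, Multiset.sum_add, Multiset.sum_add,
        Multiset.sum_replicate, Multiset.sum_replicate, Multiset.sum_replicate,
        edgeMon01, edgeMon12, edgeMon23]
      funext v; fin_cases v <;>
        simp [gen, Pi.add_apply, Pi.smul_apply, smul_eq_mul] <;> omega

lemma isMinGen_iff (t : ℕ) (m : Fin 4 → ℕ) :
    IsMinGen pathG t m ↔ ∃ i k, i + k ≤ t ∧ m = gen t i k := by
  constructor
  · rintro ⟨hes, -⟩; exact (isEdgeSum_iff t m).1 hes
  · rintro ⟨i, k, hik, rfl⟩
    refine ⟨(isEdgeSum_iff t _).2 ⟨i, k, hik, rfl⟩, ?_⟩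
    intro m' hes hle
    obtain ⟨i', k', hik', rfl⟩ := (isEdgeSum_iff t m').1 hes
    obtain ⟨rfl, rfl⟩ := gen_le hle hik
    rfl

lemma mem_le_mLcm {V : Type*} {σ : Finset (V → ℕ)} {m : V → ℕ} (h : m ∈ σ) :
    m ≤ mLcm σ := Finset.le_sup (f := id) h

lemma mLcm_attain {V : Type*} {σ : Finset (V → ℕ)} (hσ : σ.Nonempty) (v : V) :
    ∃ m ∈ σ, m v = mLcm σ v := by
  have : mLcm σ v = σ.sup (fun m => m v) := by rw [mLcm, Finset.sup_apply]; rfl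
  rw [this]
  obtain ⟨m, hm, h⟩ := Finset.exists_mem_eq_sup σ hσ (fun m => m v)
  exact ⟨m, hm, h.symm⟩

lemma mLcm_pair {V : Type*} [DecidableEq (V → ℕ)] (x y : V → ℕ) :
    mLcm ({x, y} : Finset (V → ℕ)) = x ⊔ y := by simp [mLcm]

lemma mLcm_insert {V : Type*} [DecidableEq (V → ℕ)] (x : V → ℕ) (σ : Finset (V → ℕ)) :
    mLcm (insert x σ) = x ⊔ mLcm σ := by simp [mLcm]
/-- Horizontal adjacent pair is Scarf. -/
lemma scarf_horiz (t i k : ℕ) (h : i + 1 + k ≤ t) :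
    IsScarfPow pathG t {gen t (i + 1) k, gen t i k} := by
  constructor
  · intro m hm
    rcases Finset.mem_insert.1 hm with rfl | hm
    · exact (isMinGen_iff t _).2 ⟨i + 1, k, by omega, rfl⟩
    · rw [Finset.mem_singleton] at hm; subst hm
      exact (isMinGen_iff t _).2 ⟨i, k, by omega, rfl⟩
  · intro τ hτ hL
    have hsub : τ ⊆ {gen t (i + 1) k, gen t i k} := by
      intro m hm
      obtain ⟨i', k', hik', rfl⟩ := (isMinGen_iff t m).1 (hτ m hm)
      have hle := mem_le_mLcm hm
      rw [hL, mLcm_pair] at hle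
      have c0 : i' ≤ max (i + 1) i := hle 0
      have c1 : t - k' ≤ max (t - k) (t - k) := hle 1
      have c2 : t - i' ≤ max (t - (i + 1)) (t - i) := hle 2
      have c3 : k' ≤ max k k := hle 3
      have : (i' = i + 1 ∨ i' = i) ∧ k' = k := by
        constructor <;> omega
      obtain ⟨hi' | hi', rfl⟩ := this <;> subst hi' <;> simp [Finset.mem_insert]
    have hne : τ.Nonempty := by
      rcases τ.eq_empty_or_nonempty with rfl | hne
      · exfalso
        have := congrFun hL 1
        have hz : mLcm (∅ : Finset (Fin 4 → ℕ)) 1 = 0 := rfl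
        rw [hz, mLcm_pair] at this
        have : (0 : ℕ) = max (t - k) (t - k) := this
        omega
      · exact hne
    obtain ⟨ma, hma, ea⟩ := mLcm_attain hne 0
    obtain ⟨mb, hmb, eb⟩ := mLcm_attain hne 2
    rw [hL, mLcm_pair] at ea eb
    have ea' : ma 0 = max (i + 1) i := ea
    have eb' : mb 2 = max (t - (i + 1)) (t - i) := eb
    have ha : gen t (i + 1) k ∈ τ := by
      rcases Finset.mem_insert.1 (hsub hma) with rfl | h'
      · exact hma
      · rw [Finset.mem_singleton] at h'; subst h'
        exfalso; have : i = max (i + 1) i := ea'; omega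
    have hb : gen t i k ∈ τ := by
      rcases Finset.mem_insert.1 (hsub hmb) with rfl | h'
      · exfalso; have : t - (i + 1) = max (t - (i + 1)) (t - i) := eb'; omega
      · rw [Finset.mem_singleton] at h'; subst h'; exact hmb
    exact hsub.antisymm (Finset.insert_subset_iff.2 ⟨ha, Finset.singleton_subset_iff.2 hb⟩)

/-- Vertical adjacent pair is Scarf. -/
lemma scarf_vert (t i k : ℕ) (h : i + (k + 1) ≤ t) :
    IsScarfPow pathG t {gen t i (k + 1), gen t i k} := by
  constructor
  · intro m hm
    rcases Finset.mem_insert.1 hm with rfl | hm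
    · exact (isMinGen_iff t _).2 ⟨i, k + 1, by omega, rfl⟩
    · rw [Finset.mem_singleton] at hm; subst hm
      exact (isMinGen_iff t _).2 ⟨i, k, by omega, rfl⟩
  · intro τ hτ hL
    have hsub : τ ⊆ {gen t i (k + 1), gen t i k} := by
      intro m hm
      obtain ⟨i', k', hik', rfl⟩ := (isMinGen_iff t m).1 (hτ m hm)
      have hle := mem_le_mLcm hm
      rw [hL, mLcm_pair] at hle
      have c0 : i' ≤ max i i := hle 0
      have c1 : t - k' ≤ max (t - (k + 1)) (t - k) := hle 1
      have c2 : t - i' ≤ max (t - i) (t - i) := hle 2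
      have c3 : k' ≤ max (k + 1) k := hle 3
      have : (k' = k + 1 ∨ k' = k) ∧ i' = i := by
        constructor <;> omega
      obtain ⟨hk' | hk', rfl⟩ := this <;> subst hk' <;> simp [Finset.mem_insert]
    have hne : τ.Nonempty := by
      rcases τ.eq_empty_or_nonempty with rfl | hne
      · exfalso
        have := congrFun hL 2
        have hz : mLcm (∅ : Finset (Fin 4 → ℕ)) 2 = 0 := rfl
        rw [hz, mLcm_pair] at this
        have : (0 : ℕ) = max (t - i) (t - i) := this
        omega
      · exact hne
    obtain ⟨ma, hma, ea⟩ := mLcm_attain hne 3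
    obtain ⟨mb, hmb, eb⟩ := mLcm_attain hne 1
    rw [hL, mLcm_pair] at ea eb
    have ea' : ma 3 = max (k + 1) k := ea
    have eb' : mb 1 = max (t - (k + 1)) (t - k) := eb
    have ha : gen t i (k + 1) ∈ τ := by
      rcases Finset.mem_insert.1 (hsub hma) with rfl | h'
      · exact hma
      · rw [Finset.mem_singleton] at h'; subst h'
        exfalso; have : k = max (k + 1) k := ea'; omega
    have hb : gen t i k ∈ τ := by
      rcases Finset.mem_insert.1 (hsub hmb) with rfl | h'
      · exfalso; have : t - (k + 1) = max (t - (k + 1)) (t - k) := eb'; omega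
      · rw [Finset.mem_singleton] at h'; subst h'; exact hmb
    exact hsub.antisymm (Finset.insert_subset_iff.2 ⟨ha, Finset.singleton_subset_iff.2 hb⟩)

/-- If there is a third generator under the lcm of a pair, the pair is not Scarf. -/
lemma not_scarf_third {t i k α β i' k' : ℕ} (h3 : i' + k' ≤ t)
    (c0 : i' ≤ max i α) (c1 : t - k' ≤ max (t - k) (t - β))
    (c2 : t - i' ≤ max (t - i) (t - α)) (c3 : k' ≤ max k β)
    (hne1 : ¬(i' = i ∧ k' = k)) (hne2 : ¬(i' = α ∧ k' = β)) :
    ¬ IsScarfPow pathG t {gen t i k, gen t α β} := by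
  intro hS
  have hle : gen t i' k' ≤ mLcm {gen t i k, gen t α β} := by
    rw [mLcm_pair]
    intro v
    fin_cases v
    · exact c0
    · exact c1
    · exact c2
    · exact c3
  have hmem : ∀ m ∈ insert (gen t i' k') ({gen t i k, gen t α β} : Finset (Fin 4 → ℕ)),
      IsMinGen pathG t m := by
    intro m hm
    rcases Finset.mem_insert.1 hm with rfl | hm
    · exact (isMinGen_iff t _).2 ⟨i', k', h3, rfl⟩
    · exact hS.1 m hm
  have heq := hS.2 _ hmem (by rw [mLcm_insert, sup_eq_right.mpr hle])
  have : gen t i' k' ∈ ({gen t i k, gen t α β} : Finset (Fin 4 → ℕ)) := by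
    rw [← heq]; exact Finset.mem_insert_self _ _
  rcases Finset.mem_insert.1 this with h' | h'
  · exact hne1 (gen_inj h')
  · rw [Finset.mem_singleton] at h'; exact hne2 (gen_inj h')

lemma card_le_two {t : ℕ} (σ : Finset (Fin 4 → ℕ)) (hS : IsScarfPow pathG t σ) :
    σ.card ≤ 2 := by
  by_contra hc
  push_neg at hc
  have hne : σ.Nonempty := Finset.card_pos.1 (by omega)
  have hform : ∀ m ∈ σ, m 0 + m 3 ≤ t ∧ m 1 = t - m 3 ∧ m 2 = t - m 0 ∧
      m = gen t (m 0) (m 3) := by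
    intro m hm
    obtain ⟨i, k, hik, rfl⟩ := (isMinGen_iff t m).1 (hS.1 m hm)
    exact ⟨hik, rfl, rfl, rfl⟩
  obtain ⟨p0, hp0, e0⟩ := mLcm_attain hne 0
  obtain ⟨p1, hp1, e1⟩ := mLcm_attain hne 1
  obtain ⟨p2, hp2, e2⟩ := mLcm_attain hne 2
  obtain ⟨p3, hp3, e3⟩ := mLcm_attain hne 3
  have hb : ∀ m ∈ σ, p2 0 ≤ m 0 ∧ m 0 ≤ p0 0 ∧ p1 3 ≤ m 3 ∧ m 3 ≤ p3 3 := by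
    intro m hm
    obtain ⟨hmt, hm1, hm2, -⟩ := hform m hm
    obtain ⟨h2t, h21, h22, -⟩ := hform p2 hp2
    obtain ⟨h1t, h11, h12, -⟩ := hform p1 hp1
    have u0 : m 0 ≤ mLcm σ 0 := mem_le_mLcm hm 0
    have u1 : m 1 ≤ mLcm σ 1 := mem_le_mLcm hm 1
    have u2 : m 2 ≤ mLcm σ 2 := mem_le_mLcm hm 2
    have u3 : m 3 ≤ mLcm σ 3 := mem_le_mLcm hm 3
    exact ⟨by omega, by omega, by omega, by omega⟩
  obtain ⟨hp0t, hp01, hp02, hp0g⟩ := hform p0 hp0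
  obtain ⟨hp1t, hp11, hp12, hp1g⟩ := hform p1 hp1
  obtain ⟨hp2t, hp21, hp22, hp2g⟩ := hform p2 hp2
  obtain ⟨hp3t, hp31, hp32, hp3g⟩ := hform p3 hp3
  obtain ⟨b00, b01, b02, b03⟩ := hb p0 hp0
  obtain ⟨b10, b11, b12, b13⟩ := hb p1 hp1
  obtain ⟨b20, b21, b22, b23⟩ := hb p2 hp2
  obtain ⟨b30, b31, b32, b33⟩ := hb p3 hp3
  by_cases hI : p2 0 = p0 0 <;> by_cases hK : p1 3 = p3 3
  · -- all members equal: card ≤ 1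
    have hsub : σ ⊆ {gen t (p0 0) (p1 3)} := by
      intro m hm
      obtain ⟨-, -, -, hg⟩ := hform m hm
      obtain ⟨c0, c1, c2, c3⟩ := hb m hm
      rw [Finset.mem_singleton, hg, show m 0 = p0 0 by omega, show m 3 = p1 3 by omega]
    have := Finset.card_le_card hsub
    simp at this; omega
  · -- i constant, k varies: τ = {p1, p3}
    have hτ : ({p1, p3} : Finset (Fin 4 → ℕ)) = σ := by
      refine hS.2 _ (fun m hm => ?_) ?_
      · rcases Finset.mem_insert.1 hm with rfl | hm
        · exact hS.1 _ hp1
        · rw [Finset.mem_singleton] at hm; subst hm; exact hS.1 _ hp3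
      · rw [mLcm_pair]
        have q0 : (p1 ⊔ p3) 0 = mLcm σ 0 := by
          show max (p1 0) (p3 0) = mLcm σ 0; omega
        have q1 : (p1 ⊔ p3) 1 = mLcm σ 1 := by
          show max (p1 1) (p3 1) = mLcm σ 1; omega
        have q2 : (p1 ⊔ p3) 2 = mLcm σ 2 := by
          show max (p1 2) (p3 2) = mLcm σ 2; omega
        have q3 : (p1 ⊔ p3) 3 = mLcm σ 3 := by
          show max (p1 3) (p3 3) = mLcm σ 3; omega
        funext v
        fin_cases v
        · exact q0
        · exact q1
        · exact q2
        · exact q3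
    have hcard : σ.card ≤ 2 := by
      rw [← hτ]; exact (Finset.card_insert_le _ _).trans (by simp)
    omega
  · -- k constant, i varies: τ = {p0, p2}
    have hτ : ({p0, p2} : Finset (Fin 4 → ℕ)) = σ := by
      refine hS.2 _ (fun m hm => ?_) ?_
      · rcases Finset.mem_insert.1 hm with rfl | hm
        · exact hS.1 _ hp0
        · rw [Finset.mem_singleton] at hm; subst hm; exact hS.1 _ hp2
      · rw [mLcm_pair]
        have q0 : (p0 ⊔ p2) 0 = mLcm σ 0 := by
          show max (p0 0) (p2 0) = mLcm σ 0; omega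
        have q1 : (p0 ⊔ p2) 1 = mLcm σ 1 := by
          show max (p0 1) (p2 1) = mLcm σ 1; omega
        have q2 : (p0 ⊔ p2) 2 = mLcm σ 2 := by
          show max (p0 2) (p2 2) = mLcm σ 2; omega
        have q3 : (p0 ⊔ p2) 3 = mLcm σ 3 := by
          show max (p0 3) (p2 3) = mLcm σ 3; omega
        funext v
        fin_cases v
        · exact q0
        · exact q1
        · exact q2
        · exact q3
    have hcard : σ.card ≤ 2 := by
      rw [← hτ]; exact (Finset.card_insert_le _ _).trans (by simp)
    omega
  · -- both vary: corners
    have hcorner : ∀ i' k', i' + k' ≤ t → p2 0 ≤ i' → i' ≤ p0 0 → p1 3 ≤ k' → k' ≤ p3 3 →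
        gen t i' k' ∉ σ → False := by
      intro i' k' hsum hl0 hl1 hl2 hl3 hnotin
      have hle : gen t i' k' ≤ mLcm σ := by
        have q0 : i' ≤ mLcm σ 0 := by omega
        have q1 : t - k' ≤ mLcm σ 1 := by omega
        have q2 : t - i' ≤ mLcm σ 2 := by omega
        have q3 : k' ≤ mLcm σ 3 := by omega
        intro v
        fin_cases v
        · exact q0
        · exact q1
        · exact q2
        · exact q3
      have heq := hS.2 (insert (gen t i' k') σ) ?_ ?_
      · exact hnotin (heq ▸ Finset.mem_insert_self _ _)
      · intro m hm
        rcases Finset.mem_insert.1 hm with rfl | hm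
        · exact (isMinGen_iff t _).2 ⟨i', k', hsum, rfl⟩
        · exact hS.1 m hm
      · rw [mLcm_insert, sup_eq_right.mpr hle]
    by_cases hc1 : gen t (p2 0) (p1 3) ∈ σ
    · by_cases hc2 : gen t (p2 0) (p3 3) ∈ σ
      · by_cases hc3 : gen t (p0 0) (p1 3) ∈ σ
        · have hτ : ({gen t (p2 0) (p3 3), gen t (p0 0) (p1 3)} : Finset (Fin 4 → ℕ)) = σ := by
            refine hS.2 _ (fun m hm => ?_) ?_
            · rcases Finset.mem_insert.1 hm with rfl | hm
              · exact hS.1 _ hc2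
              · rw [Finset.mem_singleton] at hm; subst hm; exact hS.1 _ hc3
            · rw [mLcm_pair]
              have q0 : (gen t (p2 0) (p3 3) ⊔ gen t (p0 0) (p1 3)) 0 = mLcm σ 0 := by
                show max (p2 0) (p0 0) = mLcm σ 0; omega
              have q1 : (gen t (p2 0) (p3 3) ⊔ gen t (p0 0) (p1 3)) 1 = mLcm σ 1 := by
                show max (t - p3 3) (t - p1 3) = mLcm σ 1; omega
              have q2 : (gen t (p2 0) (p3 3) ⊔ gen t (p0 0) (p1 3)) 2 = mLcm σ 2 := by
                show max (t - p2 0) (t - p0 0) = mLcm σ 2; omega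
              have q3 : (gen t (p2 0) (p3 3) ⊔ gen t (p0 0) (p1 3)) 3 = mLcm σ 3 := by
                show max (p3 3) (p1 3) = mLcm σ 3; omega
              funext v
              fin_cases v
              · exact q0
              · exact q1
              · exact q2
              · exact q3
          have hmem : gen t (p2 0) (p1 3) ∈
              ({gen t (p2 0) (p3 3), gen t (p0 0) (p1 3)} : Finset (Fin 4 → ℕ)) := hτ ▸ hc1
          rcases Finset.mem_insert.1 hmem with h' | h'
          · exact hK (gen_inj h').2
          · rw [Finset.mem_singleton] at h'; exact hI (gen_inj h').1
        · exact hcorner (p0 0) (p1 3) (by omega) (by omega) (by omega) (by omega) (by omega) hc3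
      · exact hcorner (p2 0) (p3 3) (by omega) (by omega) (by omega) (by omega) (by omega) hc2
    · exact hcorner (p2 0) (p1 3) (by omega) (by omega) (by omega) (by omega) (by omega) hc1

end ScarfAux

theorem stmt17 (t : ℕ) (ht : 2 ≤ t) :
    (∀ m : Fin 4 → ℕ, IsMinGen pathG t m ↔
        ∃ i k : ℕ, i + k ≤ t ∧ m = ![i, t - k, t - i, k]) ∧
    (∀ i k α β : ℕ, i + k ≤ t → α + β ≤ t → (i, k) ≠ (α, β) →
        (IsScarfPow pathG t {![i, t - k, t - i, k], ![α, t - β, t - α, β]} ↔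
          (((i = α + 1 ∨ α = i + 1) ∧ k = β) ∨
            (i = α ∧ (k = β + 1 ∨ β = k + 1))))) ∧
    (∀ σ : Finset (Fin 4 → ℕ), IsScarfPow pathG t σ → σ.card ≤ 2) := by
  refine ⟨fun m => isMinGen_iff t m, ?_, fun σ hS => card_le_two σ hS⟩
  intro i k α β hik hαβ hne
  constructor
  · intro hS
    by_contra hadj
    have hne' : ¬(i = α ∧ k = β) := by
      rintro ⟨rfl, rfl⟩; exact hne rfl
    have A1 : i ≠ α + 1 ∨ k ≠ β := by
      by_contra h; push_neg at h; exact hadj (Or.inl ⟨Or.inl h.1, h.2⟩)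
    have A2 : α ≠ i + 1 ∨ k ≠ β := by
      by_contra h; push_neg at h; exact hadj (Or.inl ⟨Or.inr h.1, h.2⟩)
    have A3 : i ≠ α ∨ k ≠ β + 1 := by
      by_contra h; push_neg at h; exact hadj (Or.inr ⟨h.1, Or.inl h.2⟩)
    have A4 : i ≠ α ∨ β ≠ k + 1 := by
      by_contra h; push_neg at h; exact hadj (Or.inr ⟨h.1, Or.inr h.2⟩)
    rcases Nat.lt_trichotomy i α with h | h | h
    · by_cases hkβ : k = β
      · subst hkβ
        have hα2 : i + 2 ≤ α := by rcases A2 with h' | h' <;> omega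
        exact not_scarf_third (i' := i + 1) (k' := k)
          (by omega) (by omega) (by omega) (by omega) (by omega) (by omega) (by omega) hS
      · exact not_scarf_third (i' := i) (k' := β)
          (by omega) (by omega) (by omega) (by omega) (by omega) (by omega) (by omega) hS
    · subst h
      have hkβ : k ≠ β := fun hh => hne' ⟨rfl, hh⟩
      rcases Nat.lt_trichotomy k β with h' | h' | h'
      · have hβ2 : k + 2 ≤ β := by rcases A4 with h'' | h'' <;> omega
        exact not_scarf_third (i' := i) (k' := k + 1)
          (by omega) (by omega) (by omega) (by omega) (by omega) (by omega) (by omega) hS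
      · exact absurd h' hkβ
      · have hk2 : β + 2 ≤ k := by rcases A3 with h'' | h'' <;> omega
        exact not_scarf_third (i' := i) (k' := β + 1)
          (by omega) (by omega) (by omega) (by omega) (by omega) (by omega) (by omega) hS
    · by_cases hkβ : k = β
      · subst hkβ
        have hi2 : α + 2 ≤ i := by rcases A1 with h' | h' <;> omega
        exact not_scarf_third (i' := α + 1) (k' := k)
          (by omega) (by omega) (by omega) (by omega) (by omega) (by omega) (by omega) hS
      · exact not_scarf_third (i' := α) (k' := k)
          (by omega) (by omega) (by omega) (by omega) (by omega) (by omega) (by omega) hS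
  · rintro (⟨rfl | rfl, rfl⟩ | ⟨rfl, rfl | rfl⟩)
    · exact scarf_horiz t α k (by omega)
    · have h := scarf_horiz t i k (by omega)
      rwa [Finset.pair_comm] at h
    · exact scarf_vert t i β (by omega)
    · have h := scarf_vert t i k (by omega)
      rwa [Finset.pair_comm] at h
end
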